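/- arXiv:1707.00055 — 7 statements merged into one kernel-verified Lean document; each statement's English description precedes it below -/
import Mathlib

section
/- Let P, Q, R, S be n×n complex matrices such that (P,Q,R,S) is a pseudo-block decomposition of N = P+Q+R+S and in addition R^2 = S^2 = 0. Let T be the 2n×2n block matrix T = [[P, R], [S, Q]]. For any positive integer r, write T^r in block form as T^r = [[A1, A3], [A4, A2]] with n×n blocks A1, A2, A3, A4. Then N^r = A1 + A2 + A3 + A4, the quadruple (A1, A2, A3, A4) is a pseudo-block decomposition of N^r (i.e., A1·A2 = A2·A1 = 0, A1·A4 = A4·A2 = A2·A3 = A3·A1 = 0, and A3, A4 are nilpotent), and moreover A1·Q = A2·P = A1·S = A4·Q = A2·R = A3·P = 0 and A3^2 = A4^2 = 0. -/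
open Matrix Finset

/-- `X` is the Drazin inverse of `A`: `A X = X A`, `X A X = X`, and
`A^(k+1) X = A^k` for some (hence all sufficiently large) `k`. -/
def IsDrazinInverse {ι : Type*} [Fintype ι] [DecidableEq ι]
    (A X : Matrix ι ι ℂ) : Prop :=
  A * X = X * A ∧ X * A * X = X ∧ ∃ k : ℕ, A ^ (k + 1) * X = A ^ k

private lemma key {d : ℕ} (P Q R S : Matrix (Fin d) (Fin d) ℂ)
    (hPQ : P * Q = 0) (hQP : Q * P = 0)
    (hPS : P * S = 0) (hSQ : S * Q = 0) (hQR : Q * R = 0) (hRP : R * P = 0)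
    (hR2 : R * R = 0) (hS2 : S * S = 0) :
    ∀ r : ℕ, 1 ≤ r →
    (P + Q + R + S) ^ r =
      ((Matrix.fromBlocks P R S Q) ^ r).toBlocks₁₁ +
      ((Matrix.fromBlocks P R S Q) ^ r).toBlocks₂₂ +
      ((Matrix.fromBlocks P R S Q) ^ r).toBlocks₁₂ +
      ((Matrix.fromBlocks P R S Q) ^ r).toBlocks₂₁ ∧
    ((Matrix.fromBlocks P R S Q) ^ r).toBlocks₁₁ * Q = 0 ∧
    ((Matrix.fromBlocks P R S Q) ^ r).toBlocks₁₁ * S = 0 ∧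
    ((Matrix.fromBlocks P R S Q) ^ r).toBlocks₂₂ * P = 0 ∧
    ((Matrix.fromBlocks P R S Q) ^ r).toBlocks₂₂ * R = 0 ∧
    ((Matrix.fromBlocks P R S Q) ^ r).toBlocks₁₂ * P = 0 ∧
    ((Matrix.fromBlocks P R S Q) ^ r).toBlocks₁₂ * R = 0 ∧
    ((Matrix.fromBlocks P R S Q) ^ r).toBlocks₂₁ * Q = 0 ∧
    ((Matrix.fromBlocks P R S Q) ^ r).toBlocks₂₁ * S = 0 := by
  intro r hr
  induction r, hr using Nat.le_induction with
  | base =>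
    simp only [pow_one, Matrix.toBlocks_fromBlocks₁₁, Matrix.toBlocks_fromBlocks₁₂,
      Matrix.toBlocks_fromBlocks₂₁, Matrix.toBlocks_fromBlocks₂₂]
    exact ⟨trivial, hPQ, hPS, hQP, hQR, hRP, hR2, hSQ, hS2⟩
  | succ n hn ih =>
    obtain ⟨hsum, h1Q, h1S, h2P, h2R, h3P, h3R, h4Q, h4S⟩ := ih
    set M := (Matrix.fromBlocks P R S Q) ^ n with hMdef
    set A1 := M.toBlocks₁₁
    set A3 := M.toBlocks₁₂
    set A4 := M.toBlocks₂₁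
    set A2 := M.toBlocks₂₂
    have hM : M = Matrix.fromBlocks A1 A3 A4 A2 := (Matrix.fromBlocks_toBlocks M).symm
    have hpow : (Matrix.fromBlocks P R S Q) ^ (n + 1) =
        Matrix.fromBlocks (A1 * P + A3 * S) (A1 * R + A3 * Q)
          (A4 * P + A2 * S) (A4 * R + A2 * Q) := by
      rw [pow_succ, ← hMdef, hM, Matrix.fromBlocks_multiply]
    rw [hpow]
    simp only [Matrix.toBlocks_fromBlocks₁₁, Matrix.toBlocks_fromBlocks₁₂,
      Matrix.toBlocks_fromBlocks₂₁, Matrix.toBlocks_fromBlocks₂₂]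
    refine ⟨?_, ?_, ?_, ?_, ?_, ?_, ?_, ?_, ?_⟩
    · rw [pow_succ, hsum]
      simp only [Matrix.add_mul, Matrix.mul_add]
      rw [h1Q, h1S, h2P, h2R, h3P, h3R, h4Q, h4S]
      abel
    all_goals
      simp only [Matrix.add_mul, Matrix.mul_assoc, hPQ, hQP, hPS, hSQ, hQR, hRP, hR2, hS2,
        Matrix.mul_zero, add_zero, zero_add, Matrix.zero_mul]

theorem stmt_0 {d : ℕ} (P Q R S N : Matrix (Fin d) (Fin d) ℂ)
    (hN : N = P + Q + R + S)
    (hPQ : P * Q = 0) (hQP : Q * P = 0)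
    (hPS : P * S = 0) (hSQ : S * Q = 0) (hQR : Q * R = 0) (hRP : R * P = 0)
    (hRnil : IsNilpotent R) (hSnil : IsNilpotent S)
    (hR2 : R ^ 2 = 0) (hS2 : S ^ 2 = 0)
    (r : ℕ) (hr : 1 ≤ r)
    (A1 A2 A3 A4 : Matrix (Fin d) (Fin d) ℂ)
    (hTr : (Matrix.fromBlocks P R S Q) ^ r = Matrix.fromBlocks A1 A3 A4 A2) :
    N ^ r = A1 + A2 + A3 + A4 ∧
      A1 * A2 = 0 ∧ A2 * A1 = 0 ∧
      A1 * A4 = 0 ∧ A4 * A2 = 0 ∧ A2 * A3 = 0 ∧ A3 * A1 = 0 ∧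
      IsNilpotent A3 ∧ IsNilpotent A4 ∧
      A1 * Q = 0 ∧ A2 * P = 0 ∧ A1 * S = 0 ∧ A4 * Q = 0 ∧
      A2 * R = 0 ∧ A3 * P = 0 ∧ A3 ^ 2 = 0 ∧ A4 ^ 2 = 0 := by
  have hR2' : R * R = 0 := by rw [← pow_two]; exact hR2
  have hS2' : S * S = 0 := by rw [← pow_two]; exact hS2
  obtain ⟨hsum, h1Q, h1S, h2P, h2R, h3P, h3R, h4Q, h4S⟩ :=
    key P Q R S hPQ hQP hPS hSQ hQR hRP hR2' hS2' r hr
  rw [hTr] at hsum h1Q h1S h2P h2R h3P h3R h4Q h4S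
  simp only [Matrix.toBlocks_fromBlocks₁₁, Matrix.toBlocks_fromBlocks₁₂,
    Matrix.toBlocks_fromBlocks₂₁, Matrix.toBlocks_fromBlocks₂₂] at hsum h1Q h1S h2P h2R h3P h3R h4Q h4S
  -- start decomposition: r = m + 1, T^r = T * T^m
  obtain ⟨m, rfl⟩ : ∃ m, r = m + 1 := ⟨r - 1, (Nat.succ_pred_eq_of_pos hr).symm⟩
  set M := (Matrix.fromBlocks P R S Q) ^ m with hMdef
  have hdec : Matrix.fromBlocks A1 A3 A4 A2 =
      Matrix.fromBlocks (P * M.toBlocks₁₁ + R * M.toBlocks₂₁)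
        (P * M.toBlocks₁₂ + R * M.toBlocks₂₂)
        (S * M.toBlocks₁₁ + Q * M.toBlocks₂₁)
        (S * M.toBlocks₁₂ + Q * M.toBlocks₂₂) := by
    rw [← hTr, pow_succ', ← hMdef]
    conv_lhs => rw [← Matrix.fromBlocks_toBlocks M]
    rw [Matrix.fromBlocks_multiply]
  have e1 : A1 = P * M.toBlocks₁₁ + R * M.toBlocks₂₁ := by
    have := congrArg Matrix.toBlocks₁₁ hdec; simpa using this
  have e3 : A3 = P * M.toBlocks₁₂ + R * M.toBlocks₂₂ := by
    have := congrArg Matrix.toBlocks₁₂ hdec; simpa using this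
  have e4 : A4 = S * M.toBlocks₁₁ + Q * M.toBlocks₂₁ := by
    have := congrArg Matrix.toBlocks₂₁ hdec; simpa using this
  have e2 : A2 = S * M.toBlocks₁₂ + Q * M.toBlocks₂₂ := by
    have := congrArg Matrix.toBlocks₂₂ hdec; simpa using this
  have h12 : A1 * A2 = 0 := by
    rw [e2, Matrix.mul_add, ← Matrix.mul_assoc, ← Matrix.mul_assoc, h1S, h1Q]; simp
  have h21 : A2 * A1 = 0 := by
    rw [e1, Matrix.mul_add, ← Matrix.mul_assoc, ← Matrix.mul_assoc, h2P, h2R]; simp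
  have h14 : A1 * A4 = 0 := by
    rw [e4, Matrix.mul_add, ← Matrix.mul_assoc, ← Matrix.mul_assoc, h1S, h1Q]; simp
  have h42 : A4 * A2 = 0 := by
    rw [e2, Matrix.mul_add, ← Matrix.mul_assoc, ← Matrix.mul_assoc, h4S, h4Q]; simp
  have h23 : A2 * A3 = 0 := by
    rw [e3, Matrix.mul_add, ← Matrix.mul_assoc, ← Matrix.mul_assoc, h2P, h2R]; simp
  have h31 : A3 * A1 = 0 := by
    rw [e1, Matrix.mul_add, ← Matrix.mul_assoc, ← Matrix.mul_assoc, h3P, h3R]; simp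
  have h33 : A3 ^ 2 = 0 := by
    rw [pow_two]
    nth_rewrite 2 [e3]
    rw [Matrix.mul_add, ← Matrix.mul_assoc, ← Matrix.mul_assoc, h3P, h3R]; simp
  have h44 : A4 ^ 2 = 0 := by
    rw [pow_two]
    nth_rewrite 2 [e4]
    rw [Matrix.mul_add, ← Matrix.mul_assoc, ← Matrix.mul_assoc, h4S, h4Q]; simp
  exact ⟨by rw [hN, hsum], h12, h21, h14, h42, h23, h31, ⟨2, h33⟩, ⟨2, h44⟩,
    h1Q, h2P, h1S, h4Q, h2R, h3P, h33, h44⟩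
end

section
/- Let P, Q, R, S be n×n complex matrices such that (P,Q,R,S) is a pseudo-block decomposition of N = P+Q+R+S and in addition R^2 = S^2 = 0. Let T = [[P, R], [S, Q]], and for each positive integer i write T^i in block form as T^i = [[A1^(i), A3^(i)], [A4^(i), A2^(i)]] with n×n blocks. Then for all positive integers r and s: A1^(r)·A2^(s) = A2^(r)·A1^(s) = A1^(r)·A4^(s) = A4^(r)·A2^(s) = A2^(r)·A3^(s) = A3^(r)·A1^(s) = 0. -/
open Matrix Finset

theorem stmt_1 {d : ℕ} (P Q R S N : Matrix (Fin d) (Fin d) ℂ)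
    (hN : N = P + Q + R + S)
    (hPQ : P * Q = 0) (hQP : Q * P = 0)
    (hPS : P * S = 0) (hSQ : S * Q = 0) (hQR : Q * R = 0) (hRP : R * P = 0)
    (hRnil : IsNilpotent R) (hSnil : IsNilpotent S)
    (hR2 : R ^ 2 = 0) (hS2 : S ^ 2 = 0)
    (A1 A2 A3 A4 : ℕ → Matrix (Fin d) (Fin d) ℂ)
    (hT : ∀ i : ℕ, 1 ≤ i →
      (Matrix.fromBlocks P R S Q) ^ i = Matrix.fromBlocks (A1 i) (A3 i) (A4 i) (A2 i)) :
    ∀ r s : ℕ, 1 ≤ r → 1 ≤ s →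
      A1 r * A2 s = 0 ∧ A2 r * A1 s = 0 ∧ A1 r * A4 s = 0 ∧
      A4 r * A2 s = 0 ∧ A2 r * A3 s = 0 ∧ A3 r * A1 s = 0 := by
  have hSS : S * S = 0 := by rw [← sq, hS2]
  have hRR : R * R = 0 := by rw [← sq, hR2]
  -- base case blocks
  have hbase := hT 1 le_rfl
  rw [pow_one] at hbase
  have hb1 : A1 1 = P := by
    have := congrArg Matrix.toBlocks₁₁ hbase
    simpa [Matrix.toBlocks_fromBlocks₁₁] using this.symm
  have hb3 : A3 1 = R := by
    have := congrArg Matrix.toBlocks₁₂ hbase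
    simpa [Matrix.toBlocks_fromBlocks₁₂] using this.symm
  have hb4 : A4 1 = S := by
    have := congrArg Matrix.toBlocks₂₁ hbase
    simpa [Matrix.toBlocks_fromBlocks₂₁] using this.symm
  have hb2 : A2 1 = Q := by
    have := congrArg Matrix.toBlocks₂₂ hbase
    simpa [Matrix.toBlocks_fromBlocks₂₂] using this.symm
  -- right recurrence: T^(i+1) = T^i * T
  have recR : ∀ i : ℕ, 1 ≤ i →
      A1 (i+1) = A1 i * P + A3 i * S ∧ A3 (i+1) = A1 i * R + A3 i * Q ∧
      A4 (i+1) = A4 i * P + A2 i * S ∧ A2 (i+1) = A4 i * R + A2 i * Q := by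
    intro i hi
    have h1 := hT i hi
    have h2 := hT (i+1) (by omega)
    rw [pow_succ, h1, Matrix.fromBlocks_multiply] at h2
    refine ⟨?_, ?_, ?_, ?_⟩
    · have := congrArg Matrix.toBlocks₁₁ h2
      simpa [Matrix.toBlocks_fromBlocks₁₁] using this.symm
    · have := congrArg Matrix.toBlocks₁₂ h2
      simpa [Matrix.toBlocks_fromBlocks₁₂] using this.symm
    · have := congrArg Matrix.toBlocks₂₁ h2
      simpa [Matrix.toBlocks_fromBlocks₂₁] using this.symm
    · have := congrArg Matrix.toBlocks₂₂ h2
      simpa [Matrix.toBlocks_fromBlocks₂₂] using this.symm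
  -- left recurrence: T^(i+1) = T * T^i
  have recL : ∀ i : ℕ, 1 ≤ i →
      A1 (i+1) = P * A1 i + R * A4 i ∧ A3 (i+1) = P * A3 i + R * A2 i ∧
      A4 (i+1) = S * A1 i + Q * A4 i ∧ A2 (i+1) = S * A3 i + Q * A2 i := by
    intro i hi
    have h1 := hT i hi
    have h2 := hT (i+1) (by omega)
    rw [pow_succ', h1, Matrix.fromBlocks_multiply] at h2
    refine ⟨?_, ?_, ?_, ?_⟩
    · have := congrArg Matrix.toBlocks₁₁ h2
      simpa [Matrix.toBlocks_fromBlocks₁₁] using this.symm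
    · have := congrArg Matrix.toBlocks₁₂ h2
      simpa [Matrix.toBlocks_fromBlocks₁₂] using this.symm
    · have := congrArg Matrix.toBlocks₂₁ h2
      simpa [Matrix.toBlocks_fromBlocks₂₁] using this.symm
    · have := congrArg Matrix.toBlocks₂₂ h2
      simpa [Matrix.toBlocks_fromBlocks₂₂] using this.symm
  -- right forms
  have hA1R : ∀ r, 1 ≤ r → ∃ X Y, A1 r = X * P + Y * S := by
    intro r hr
    obtain ⟨i, rfl⟩ : ∃ i, r = i + 1 := ⟨r - 1, by omega⟩
    rcases Nat.eq_zero_or_pos i with h | h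
    · subst h; exact ⟨1, 0, by simp [hb1]⟩
    · exact ⟨A1 i, A3 i, (recR i h).1⟩
  have hA4R : ∀ r, 1 ≤ r → ∃ X Y, A4 r = X * P + Y * S := by
    intro r hr
    obtain ⟨i, rfl⟩ : ∃ i, r = i + 1 := ⟨r - 1, by omega⟩
    rcases Nat.eq_zero_or_pos i with h | h
    · subst h; exact ⟨0, 1, by simp [hb4]⟩
    · exact ⟨A4 i, A2 i, (recR i h).2.2.1⟩
  have hA3R : ∀ r, 1 ≤ r → ∃ X Y, A3 r = X * R + Y * Q := by
    intro r hr
    obtain ⟨i, rfl⟩ : ∃ i, r = i + 1 := ⟨r - 1, by omega⟩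
    rcases Nat.eq_zero_or_pos i with h | h
    · subst h; exact ⟨1, 0, by simp [hb3]⟩
    · exact ⟨A1 i, A3 i, (recR i h).2.1⟩
  have hA2R : ∀ r, 1 ≤ r → ∃ X Y, A2 r = X * R + Y * Q := by
    intro r hr
    obtain ⟨i, rfl⟩ : ∃ i, r = i + 1 := ⟨r - 1, by omega⟩
    rcases Nat.eq_zero_or_pos i with h | h
    · subst h; exact ⟨0, 1, by simp [hb2]⟩
    · exact ⟨A4 i, A2 i, (recR i h).2.2.2⟩
  -- left forms
  have hA1L : ∀ s, 1 ≤ s → ∃ X Y, A1 s = P * X + R * Y := by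
    intro s hs
    obtain ⟨i, rfl⟩ : ∃ i, s = i + 1 := ⟨s - 1, by omega⟩
    rcases Nat.eq_zero_or_pos i with h | h
    · subst h; exact ⟨1, 0, by simp [hb1]⟩
    · exact ⟨A1 i, A4 i, (recL i h).1⟩
  have hA3L : ∀ s, 1 ≤ s → ∃ X Y, A3 s = P * X + R * Y := by
    intro s hs
    obtain ⟨i, rfl⟩ : ∃ i, s = i + 1 := ⟨s - 1, by omega⟩
    rcases Nat.eq_zero_or_pos i with h | h
    · subst h; exact ⟨0, 1, by simp [hb3]⟩
    · exact ⟨A3 i, A2 i, (recL i h).2.1⟩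
  have hA4L : ∀ s, 1 ≤ s → ∃ X Y, A4 s = S * X + Q * Y := by
    intro s hs
    obtain ⟨i, rfl⟩ : ∃ i, s = i + 1 := ⟨s - 1, by omega⟩
    rcases Nat.eq_zero_or_pos i with h | h
    · subst h; exact ⟨1, 0, by simp [hb4]⟩
    · exact ⟨A1 i, A4 i, (recL i h).2.2.1⟩
  have hA2L : ∀ s, 1 ≤ s → ∃ X Y, A2 s = S * X + Q * Y := by
    intro s hs
    obtain ⟨i, rfl⟩ : ∃ i, s = i + 1 := ⟨s - 1, by omega⟩
    rcases Nat.eq_zero_or_pos i with h | h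
    · subst h; exact ⟨0, 1, by simp [hb2]⟩
    · exact ⟨A3 i, A2 i, (recL i h).2.2.2⟩
  -- annihilation lemmas
  have z1 : ∀ X Y Z W : Matrix (Fin d) (Fin d) ℂ,
      (X * P + Y * S) * (S * Z + Q * W) = 0 := by
    intro X Y Z W
    have e1 : P * (S * Z) = 0 := by rw [← mul_assoc, hPS, zero_mul]
    have e2 : P * (Q * W) = 0 := by rw [← mul_assoc, hPQ, zero_mul]
    have e3 : S * (S * Z) = 0 := by rw [← mul_assoc, hSS, zero_mul]
    have e4 : S * (Q * W) = 0 := by rw [← mul_assoc, hSQ, zero_mul]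
    simp [add_mul, mul_add, mul_assoc, e1, e2, e3, e4]
  have z2 : ∀ X Y Z W : Matrix (Fin d) (Fin d) ℂ,
      (X * R + Y * Q) * (P * Z + R * W) = 0 := by
    intro X Y Z W
    have e1 : R * (P * Z) = 0 := by rw [← mul_assoc, hRP, zero_mul]
    have e2 : R * (R * W) = 0 := by rw [← mul_assoc, hRR, zero_mul]
    have e3 : Q * (P * Z) = 0 := by rw [← mul_assoc, hQP, zero_mul]
    have e4 : Q * (R * W) = 0 := by rw [← mul_assoc, hQR, zero_mul]
    simp [add_mul, mul_add, mul_assoc, e1, e2, e3, e4]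
  intro r s hr hs
  obtain ⟨X1, Y1, h1r⟩ := hA1R r hr
  obtain ⟨X2, Y2, h2r⟩ := hA2R r hr
  obtain ⟨X3, Y3, h3r⟩ := hA3R r hr
  obtain ⟨X4, Y4, h4r⟩ := hA4R r hr
  obtain ⟨Z1, W1, h1s⟩ := hA1L s hs
  obtain ⟨Z2, W2, h2s⟩ := hA2L s hs
  obtain ⟨Z3, W3, h3s⟩ := hA3L s hs
  obtain ⟨Z4, W4, h4s⟩ := hA4L s hs
  refine ⟨?_, ?_, ?_, ?_, ?_, ?_⟩
  · rw [h1r, h2s]; exact z1 _ _ _ _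
  · rw [h2r, h1s]; exact z2 _ _ _ _
  · rw [h1r, h4s]; exact z1 _ _ _ _
  · rw [h4r, h2s]; exact z1 _ _ _ _
  · rw [h2r, h3s]; exact z2 _ _ _ _
  · rw [h3r, h1s]; exact z2 _ _ _ _
end

section
/- Let P, Q, R, S be n×n complex matrices such that (P,Q,R,S) is a pseudo-block decomposition of N = P+Q+R+S and in addition R^2 = S^2 = 0. Let T = [[P, R], [S, Q]] and write the Drazin inverse of T in block form as T^d = [[A1, A3], [A4, A2]] with n×n blocks. Then the Drazin inverse of N is N^d = A1 + A2 + A3 + A4, and (A1, A2, A3, A4) is a pseudo-block decomposition (i.e., A1·A2 = A2·A1 = 0, A1·A4 = A4·A2 = A2·A3 = A3·A1 = 0) with A3^2 = A4^2 = 0. -/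
open Matrix Finset

/-!
Put `T = [[P, R], [S, Q]]`, `E = [1 1]` and `F = [1; 1]`, so that `N = E T F` and
`A1 + A2 + A3 + A4 = E Tᵈ F`. With the block shifts `U = [[0, 1], [0, 0]]` and
`L = [[0, 0], [1, 0]]` the hypotheses say precisely `T U T = T L T = 0`, and since
`Tᵈ = Tᵈ Tᵈ T = T Tᵈ Tᵈ` the same holds with either outer `T` replaced by `Tᵈ`.
Read blockwise, `Tᵈ U Tᵈ = Tᵈ L Tᵈ = 0` are the eight product relations. As
`F E = 1 + U + L`, the factor `F E` can be dropped between any two of `T`, `Tᵈ`, so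
compressing by `E` and `F` carries the Drazin identities of `(T, Tᵈ)` over to
`(N, A1 + A2 + A3 + A4)`.
-/

theorem pow_succ_mul_mul_eq_zero {α : Type*} [MonoidWithZero α] {a v b : α}
    (h : a * v * b = 0) (m : ℕ) : a ^ (m + 1) * v * b = 0 := by
  rw [pow_succ, mul_assoc _ a, mul_assoc _ (a * v), h, mul_zero]

section Blocks

variable {n α : Type*} [Fintype n] [DecidableEq n] [Ring α]

theorem fromRows_one_mul_fromCols_one_sub_one :
    (fromRows 1 1 : Matrix (n ⊕ n) n α) * (fromCols 1 1 : Matrix n (n ⊕ n) α) - 1 =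
      fromBlocks 0 1 0 0 + fromBlocks 0 0 1 0 := by
  rw [sub_eq_iff_eq_add', fromRows_mul_fromCols, ← fromBlocks_one, fromBlocks_add, fromBlocks_add]
  simp

theorem fromCols_one_mul_fromBlocks_mul_fromRows_one (A B C D : Matrix n n α) :
    (fromCols 1 1 : Matrix n (n ⊕ n) α) * fromBlocks A B C D *
      (fromRows 1 1 : Matrix (n ⊕ n) n α) = A + D + B + C := by
  rw [fromCols_mul_fromBlocks, fromCols_mul_fromRows]
  noncomm_ring

end Blocks

namespace IsDrazinInverse

variable {ι : Type*} [Fintype ι] [DecidableEq ι] {A X : Matrix ι ι ℂ}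

theorem mul_mul_self (h : IsDrazinInverse A X) : A * X * X = X := by
  rw [h.1]; exact h.2.1

theorem mul_self_mul (h : IsDrazinInverse A X) : X * X * A = X := by
  rw [mul_assoc, ← h.1, ← mul_assoc]; exact h.2.1

variable {M : Matrix ι ι ℂ}

theorem drazin_mul_mul_eq_zero (h : IsDrazinInverse A X) (hM : A * M * A = 0) :
    X * M * A = 0 := by
  rw [← h.mul_self_mul]; simp only [mul_assoc] at hM ⊢; rw [hM, mul_zero, mul_zero]

theorem mul_mul_drazin_eq_zero (h : IsDrazinInverse A X) (hM : A * M * A = 0) :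
    A * M * X = 0 := by
  rw [← h.mul_mul_self, ← mul_assoc, ← mul_assoc, hM, zero_mul, zero_mul]

theorem drazin_mul_drazin_eq_zero (h : IsDrazinInverse A X) (hM : A * M * A = 0) :
    X * M * X = 0 := by
  calc X * M * X = X * M * (A * X * X) := by rw [h.mul_mul_self]
    _ = X * M * A * (X * X) := by simp only [mul_assoc]
    _ = 0 := by rw [h.drazin_mul_mul_eq_zero hM, zero_mul]

end IsDrazinInverse

section Compress

variable {ι κ : Type*} [Fintype ι] [DecidableEq ι] [Fintype κ]
  (E : Matrix κ ι ℂ) (F : Matrix ι κ ℂ)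

theorem compress_mul_compress {M M' : Matrix ι ι ℂ} (h : M * (F * E - 1) * M' = 0) :
    E * M * F * (E * M' * F) = E * (M * M') * F := by
  have hFE : M * (F * E) * M' = M * M' := by
    rwa [mul_sub, sub_mul, mul_one, sub_eq_zero] at h
  calc E * M * F * (E * M' * F)
      = E * (M * (F * E) * M') * F := by simp only [Matrix.mul_assoc]
    _ = E * (M * M') * F := by rw [hFE]

theorem compress_pow_succ [DecidableEq κ] {A : Matrix ι ι ℂ} (hA : A * (F * E - 1) * A = 0)
    (m : ℕ) : (E * A * F) ^ (m + 1) = E * A ^ (m + 1) * F := by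
  induction m with
  | zero => simp
  | succ m ih =>
    rw [pow_succ, ih, compress_mul_compress E F (pow_succ_mul_mul_eq_zero hA m), ← pow_succ]

variable {E F}

theorem IsDrazinInverse.compress [DecidableEq κ] {A X : Matrix ι ι ℂ}
    (h : IsDrazinInverse A X) (hA : A * (F * E - 1) * A = 0) :
    IsDrazinInverse (E * A * F) (E * X * F) := by
  have hAX := h.mul_mul_drazin_eq_zero hA
  have hXA := h.drazin_mul_mul_eq_zero hA
  obtain ⟨hcomm, hXAX, k, hk⟩ := h
  refine ⟨?_, ?_, k + 1, ?_⟩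
  · rw [compress_mul_compress E F hAX, compress_mul_compress E F hXA, hcomm]
  · have hXAFX : X * A * (F * E - 1) * X = 0 := by rw [mul_assoc X A, mul_assoc X, hAX, mul_zero]
    rw [compress_mul_compress E F hXA, compress_mul_compress E F hXAFX, hXAX]
  · rw [compress_pow_succ E F hA, compress_mul_compress E F (pow_succ_mul_mul_eq_zero hAX _),
      compress_pow_succ E F hA, pow_succ', mul_assoc, hk, ← pow_succ']

end Compress

theorem stmt_3_general {d : ℕ} (P Q R S N : Matrix (Fin d) (Fin d) ℂ)
    (hN : N = P + Q + R + S)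
    (hPQ : P * Q = 0) (hQP : Q * P = 0)
    (hPS : P * S = 0) (hSQ : S * Q = 0) (hQR : Q * R = 0) (hRP : R * P = 0)
    (hR2 : R ^ 2 = 0) (hS2 : S ^ 2 = 0)
    (Td : Matrix (Fin d ⊕ Fin d) (Fin d ⊕ Fin d) ℂ)
    (hTd : IsDrazinInverse (Matrix.fromBlocks P R S Q) Td)
    (A1 A2 A3 A4 : Matrix (Fin d) (Fin d) ℂ)
    (hblocks : Td = Matrix.fromBlocks A1 A3 A4 A2) :
    IsDrazinInverse N (A1 + A2 + A3 + A4) ∧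
      A1 * A2 = 0 ∧ A2 * A1 = 0 ∧
      A1 * A4 = 0 ∧ A4 * A2 = 0 ∧ A2 * A3 = 0 ∧ A3 * A1 = 0 ∧
      A3 ^ 2 = 0 ∧ A4 ^ 2 = 0 := by
  set T := fromBlocks P R S Q
  set U : Matrix (Fin d ⊕ Fin d) (Fin d ⊕ Fin d) ℂ := fromBlocks 0 1 0 0
  set L : Matrix (Fin d ⊕ Fin d) (Fin d ⊕ Fin d) ℂ := fromBlocks 0 0 1 0
  simp only [sq] at hR2 hS2 ⊢
  have hTUT : T * U * T = 0 := by simp [T, U, fromBlocks_multiply, hPS, hPQ, hS2, hSQ]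
  have hTLT : T * L * T = 0 := by simp [T, L, fromBlocks_multiply, hRP, hR2, hQP, hQR]
  have hU := hTd.drazin_mul_drazin_eq_zero hTUT
  have hL := hTd.drazin_mul_drazin_eq_zero hTLT
  simp only [hblocks, U, L, fromBlocks_multiply, ← fromBlocks_zero, fromBlocks_inj] at hU hL
  simp only [mul_zero, zero_mul, mul_one, add_zero, zero_add] at hU hL
  obtain ⟨h14, h12, h44, h42⟩ := hU
  obtain ⟨h31, h33, h21, h23⟩ := hL
  set E : Matrix (Fin d) (Fin d ⊕ Fin d) ℂ := fromCols 1 1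
  set F : Matrix (Fin d ⊕ Fin d) (Fin d) ℂ := fromRows 1 1
  have hTFET : T * (F * E - 1) * T = 0 := by
    rw [fromRows_one_mul_fromCols_one_sub_one, mul_add, add_mul, hTUT, hTLT, add_zero]
  have hDrazinN := hTd.compress hTFET
  rw [fromCols_one_mul_fromBlocks_mul_fromRows_one, ← hN, hblocks,
    fromCols_one_mul_fromBlocks_mul_fromRows_one] at hDrazinN
  exact ⟨hDrazinN, h12, h21, h14, h42, h23, h31, h33, h44⟩

theorem stmt_3 {d : ℕ} (P Q R S N : Matrix (Fin d) (Fin d) ℂ)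
    (hN : N = P + Q + R + S)
    (hPQ : P * Q = 0) (hQP : Q * P = 0)
    (hPS : P * S = 0) (hSQ : S * Q = 0) (hQR : Q * R = 0) (hRP : R * P = 0)
    (hRnil : IsNilpotent R) (hSnil : IsNilpotent S)
    (hR2 : R ^ 2 = 0) (hS2 : S ^ 2 = 0)
    (Td : Matrix (Fin d ⊕ Fin d) (Fin d ⊕ Fin d) ℂ)
    (hTd : IsDrazinInverse (Matrix.fromBlocks P R S Q) Td)
    (A1 A2 A3 A4 : Matrix (Fin d) (Fin d) ℂ)
    (hblocks : Td = Matrix.fromBlocks A1 A3 A4 A2) :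
    IsDrazinInverse N (A1 + A2 + A3 + A4) ∧
      A1 * A2 = 0 ∧ A2 * A1 = 0 ∧
      A1 * A4 = 0 ∧ A4 * A2 = 0 ∧ A2 * A3 = 0 ∧ A3 * A1 = 0 ∧
      A3 ^ 2 = 0 ∧ A4 ^ 2 = 0 :=
  stmt_3_general P Q R S N hN hPQ hQP hPS hSQ hQR hRP hR2 hS2 Td hTd A1 A2 A3 A4 hblocks
end

section
/- Let A be an n×n complex matrix and let e, f be n×n complex matrices with e^2 = e and f^2 = f. If (e A f)^i = e A^i f for all integers i ≥ 1, then the Drazin inverse of e A f is (e A f)^d = e A^d f, where A^d is the Drazin inverse of A. -/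
/-!
The Drazin inverse `A^d` is a polynomial in `A` without constant term: Cayley–Hamilton gives a
polynomial `q` with `A^(s+1) q(A) = A^s`, and then `A^d = A^N q(A)^(N+1)` for all large `N`.
The hypothesis `(e A f)^i = e A^i f` for `i ≥ 1` says that `X ↦ e X f` sends `p(A)` to
`p(e A f)` for every such polynomial `p`, so the defining identities of `A^d`, all of which
are identities between such polynomials, carry over to `e A f` and `e A^d f`.
-/

open Matrix Finset

open Polynomial

section Monoid

variable {M : Type*} [Monoid M] {a x q : M}

theorem pow_succ_mul_eq_pow_of_le {k m : ℕ} (h : a ^ (k + 1) * x = a ^ k) (hkm : k ≤ m) :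
    a ^ (m + 1) * x = a ^ m := by
  obtain ⟨j, rfl⟩ := Nat.exists_eq_add_of_le' hkm
  rw [add_assoc, pow_add a j, mul_assoc, h, ← pow_add]

theorem pow_add_mul_pow_eq_pow {k : ℕ} (h : a ^ (k + 1) * q = a ^ k) (m : ℕ) :
    a ^ (k + m) * q ^ m = a ^ k := by
  induction m with
  | zero => simp
  | succ m ih =>
    rw [show k + (m + 1) = m + (k + 1) by omega, pow_add, pow_succ' q, mul_assoc,
      ← mul_assoc (a ^ (k + 1)), h, ← mul_assoc, ← pow_add, add_comm m k, ih]

theorem eq_pow_mul_pow_succ_of_drazin {k s N : ℕ} (hax : Commute a x) (hxax : x * a * x = x)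
    (hx : a ^ (k + 1) * x = a ^ k) (hq : a ^ (s + 1) * q = a ^ s) (hkN : k ≤ N) (hsN : s ≤ N) :
    x = a ^ N * q ^ (N + 1) := by
  have hxxa : x * x * a = x := by rw [mul_assoc, ← hax.eq, ← mul_assoc, hxax]
  have hx_pow : ∀ m : ℕ, x ^ (m + 1) * a ^ m = x := by
    intro m
    induction m with
    | zero => simp
    | succ m ih =>
      calc x ^ (m + 1 + 1) * a ^ (m + 1) = x ^ m * (x * x * a) * a ^ m := by
            rw [pow_succ, pow_succ, pow_succ']; simp only [mul_assoc]
        _ = x := by rw [hxxa, ← pow_succ, ih]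
  have hidem : IsIdempotentElem (x * a) := by
    rw [IsIdempotentElem, ← mul_assoc, hxax]
  have hxN : a ^ (N + 1) * x = a ^ N := pow_succ_mul_eq_pow_of_le hx hkN
  have hqN : a ^ (N + 1) * q = a ^ N := pow_succ_mul_eq_pow_of_le hq hsN
  calc x = x ^ (N + 1) * a ^ N := (hx_pow N).symm
    _ = x ^ (N + 1) * (a ^ ((N + 1) + N) * q ^ (N + 1)) := by
      rw [add_comm (N + 1) N, pow_add_mul_pow_eq_pow hqN]
    _ = (x * a) ^ (N + 1) * a ^ N * q ^ (N + 1) := by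
      rw [pow_add a (N + 1) N, hax.symm.mul_pow]; simp only [mul_assoc]
    _ = a ^ N * q ^ (N + 1) := by
      rw [hidem.pow_succ_eq, mul_assoc x a, ← pow_succ', ← (hax.pow_left _).eq, hxN]

end Monoid

theorem exists_pow_succ_mul_aeval_eq_pow {K A : Type*} [Field K] [Ring A] [Algebra K A] {a : A}
    (ha : IsAlgebraic K a) : ∃ (s : ℕ) (q : K[X]), a ^ (s + 1) * aeval a q = a ^ s := by
  obtain ⟨p, hp0, hpa⟩ := ha
  obtain ⟨g, hpg, hg⟩ := exists_eq_pow_rootMultiplicity_mul_and_not_dvd p hp0 0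
  set s := rootMultiplicity 0 p
  set c := g.coeff 0
  have hc : c ≠ 0 := fun h => hg (by simpa [X_dvd_iff] using h)
  have hsplit : p = X ^ (s + 1) * g.divX + C c * X ^ s := by
    conv_lhs => rw [hpg, ← X_mul_divX_add g]
    simp only [map_zero, sub_zero]; ring
  refine ⟨s, -c⁻¹ • g.divX, ?_⟩
  have h0 : a ^ (s + 1) * aeval a g.divX = -(c • a ^ s) := by
    rw [eq_neg_iff_add_eq_zero, ← hpa, hsplit]
    simp [Algebra.smul_def]
  rw [map_smul, mul_smul_comm, h0, smul_neg, smul_smul, neg_mul, inv_mul_cancel₀ hc, neg_smul,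
    one_smul, neg_neg]

theorem mul_aeval_mul_eq_aeval_of_X_dvd {R A : Type*} [CommSemiring R] [Semiring A]
    [Algebra R A] {a e f : A} (hpow : ∀ i : ℕ, 1 ≤ i → (e * a * f) ^ i = e * a ^ i * f)
    {p : R[X]} (hp : X ∣ p) : e * aeval a p * f = aeval (e * a * f) p := by
  obtain ⟨p, rfl⟩ := hp
  induction p using Polynomial.induction_on' with
  | add p q hp hq => rw [mul_add, map_add, map_add, mul_add, add_mul, hp, hq]
  | monomial n r =>
    rw [X_mul_monomial, aeval_monomial, aeval_monomial, ← Algebra.smul_def, ← Algebra.smul_def,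
      mul_smul_comm, smul_mul_assoc, hpow (n + 1) (Nat.le_add_left 1 n)]

theorem IsDrazinInverse.exists_eq_aeval_X_mul {ι : Type*} [Fintype ι] [DecidableEq ι]
    {A Ad : Matrix ι ι ℂ} (hAd : IsDrazinInverse A Ad) :
    ∃ r : ℂ[X], Ad = aeval A (X * r) := by
  obtain ⟨hcomm, hxax, k, hk⟩ := hAd
  obtain ⟨s, q, hq⟩ :=
    exists_pow_succ_mul_aeval_eq_pow (Algebra.IsAlgebraic.isAlgebraic (R := ℂ) A)
  refine ⟨X ^ (s + k) * q ^ (s + k + 2), ?_⟩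
  rw [eq_pow_mul_pow_succ_of_drazin hcomm hxax hk hq (N := s + k + 1) (by omega) (by omega)]
  simp only [map_mul, map_pow, aeval_X, ← mul_assoc, ← pow_succ']

theorem stmt_4_general {d : ℕ} (A e f Ad : Matrix (Fin d) (Fin d) ℂ)
    (hAd : IsDrazinInverse A Ad)
    (hpow : ∀ i : ℕ, 1 ≤ i → (e * A * f) ^ i = e * A ^ i * f) :
    IsDrazinInverse (e * A * f) (e * Ad * f) := by
  obtain ⟨r, hr⟩ := hAd.exists_eq_aeval_X_mul
  obtain ⟨-, hxax, k, hk⟩ := hAd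
  have push := fun {p : ℂ[X]} (hp : X ∣ p) => mul_aeval_mul_eq_aeval_of_X_dvd hpow hp
  set B := e * A * f
  have hS : e * Ad * f = aeval B (X * r) := by rw [hr, push (dvd_mul_right X r)]
  rw [hS]
  -- The index is shifted to `k + 1` because `X ↦ e X f` does not send `A ^ 0` to `B ^ 0`.
  refine ⟨by simpa only [aeval_X] using ((Commute.all (X : ℂ[X]) (X * r)).map (aeval B)).eq,
    ?_, k + 1, ?_⟩
  · calc aeval B (X * r) * B * aeval B (X * r) = aeval B (X * r * X * (X * r)) := by
          simp only [map_mul, aeval_X]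
      _ = e * (Ad * A * Ad) * f := by
          rw [← push (dvd_mul_of_dvd_right (dvd_mul_right X r) _), hr]
          simp only [map_mul, aeval_X]
      _ = aeval B (X * r) := by rw [hxax, hS]
  · calc B ^ (k + 1 + 1) * aeval B (X * r) = aeval B (X ^ (k + 2) * (X * r)) := by
          simp only [map_mul, map_pow, aeval_X]
      _ = e * (A ^ (k + 2) * Ad) * f := by
          rw [← push (dvd_mul_of_dvd_right (dvd_mul_right X r) _), hr]
          simp only [map_mul, map_pow, aeval_X]
      _ = B ^ (k + 1) := by
          rw [pow_succ_mul_eq_pow_of_le hk k.le_succ, hpow (k + 1) k.succ_pos, mul_assoc]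

theorem stmt_4 {d : ℕ} (A e f Ad : Matrix (Fin d) (Fin d) ℂ)
    (he : e ^ 2 = e) (hf : f ^ 2 = f)
    (hAd : IsDrazinInverse A Ad)
    (hpow : ∀ i : ℕ, 1 ≤ i → (e * A * f) ^ i = e * A ^ i * f) :
    IsDrazinInverse (e * A * f) (e * Ad * f) :=
  stmt_4_general A e f Ad hAd hpow
end

section
/- Let P, Q, R, S be n×n complex matrices with PQ = QP = 0, PS = SQ = QR = RP = 0, and SP = SR = 0, and let N = P+Q+R+S. Let T = (S+Q) + P^π(R+P), let T^d be the Drazin inverse of T, and let g be a positive integer with g ≥ ind(T). Then the Drazin inverse of N is N^d = P^d + X + T^d, where X = Σ_{k=0}^{g−1} (P^d)^{k+2} R T^k T^π − P^d R T^d. -/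
open Matrix Finset

lemma aux_main {α : Type*} [Ring α] (A C T Pd Td N M : α) (g : ℕ)
    (hCA : C*A = 0) (hTA : T*A = 0) (hAT : A*T = 0) (hTC : T*C = 0) (hCC : C*C = 0)
    (hAPd : A*Pd = Pd*A) (hPdAPd : Pd*A*Pd = Pd) (hAAPd : A*A*Pd = A)
    (hCPd : C*Pd = 0) (hPdT : Pd*T = 0) (hTPd : T*Pd = 0)
    (hEC : A*(Pd*C) = C)
    (hTTd : T*Td = Td*T) (hTdTTd : Td*T*Td = Td)
    (hgT : T^g*(1-T*Td) = 0)
    (hN : N = A + C + T)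
    (hM : M = Pd + ((∑ k ∈ Finset.range g, Pd^(k+2)*C*T^k*(1-T*Td)) - Pd*C*Td) + Td) :
    N*M = M*N ∧ M*N*M = M ∧ N^(g+3)*M = N^(g+2) := by
  -- abbreviations
  obtain ⟨W, hW⟩ : ∃ w : α, w = 1 - T*Td := ⟨_, rfl⟩
  rw [← hW] at hgT hM
  -- right-associate the sum in hM
  have hMsum : (∑ k ∈ Finset.range g, Pd^(k+2)*C*T^k*W)
      = ∑ k ∈ Finset.range g, Pd^(k+2)*(C*(T^k*W)) :=
    Finset.sum_congr rfl fun k _ => by rw [mul_assoc, mul_assoc]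
  rw [hMsum] at hM
  obtain ⟨S₂, hS₂⟩ : ∃ s : α, s = ∑ k ∈ Finset.range g, Pd^(k+2)*(C*(T^k*W)) := ⟨_, rfl⟩
  rw [← hS₂] at hM
  obtain ⟨Y, hY⟩ : ∃ y : α, y = ∑ k ∈ Finset.range g, Pd^(k+1)*(C*(T^k*W)) := ⟨_, rfl⟩
  -- basic derived facts
  have hTd2 : Td*(Td*T) = Td := by rw [← hTTd, ← mul_assoc, hTdTTd]
  have hTd3 : T*(Td*Td) = Td := by rw [← mul_assoc, hTTd]; exact hTdTTd
  have hTdPd : Td*Pd = 0 := by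
    conv_lhs => rw [← hTd2]
    rw [mul_assoc, mul_assoc, hTPd, mul_zero, mul_zero]
  have hPdTd : Pd*Td = 0 := by
    conv_lhs => rw [← hTd3]
    rw [← mul_assoc, hPdT, zero_mul]
  have hPdAA : Pd*(A*A) = A := by
    rw [← mul_assoc, ← hAPd, mul_assoc, ← hAPd, ← mul_assoc, hAAPd]
  have hTdA : Td*A = 0 := by
    conv_lhs => rw [← hPdAA]
    rw [← mul_assoc, hTdPd, zero_mul]
  have hATd : A*Td = 0 := by
    conv_lhs => rw [← hAAPd]
    rw [mul_assoc, hPdTd, mul_zero]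
  have hTdC : Td*C = 0 := by
    conv_lhs => rw [← hEC]
    rw [← mul_assoc, hTdA, zero_mul]
  have hTdTTd' : Td*(T*Td) = Td := by rw [← mul_assoc, hTdTTd]
  have hTTd2 : (T*Td)*(T*Td) = T*Td := by rw [mul_assoc, hTdTTd']
  -- W lemmas
  have hWPd : W*Pd = Pd := by rw [hW, sub_mul, one_mul, mul_assoc, hTdPd, mul_zero, sub_zero]
  have hPdW : Pd*W = Pd := by rw [hW, mul_sub, mul_one, ← mul_assoc, hPdT, zero_mul, sub_zero]
  have hWC : W*C = C := by rw [hW, sub_mul, one_mul, mul_assoc, hTdC, mul_zero, sub_zero]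
  have hWA : W*A = A := by rw [hW, sub_mul, one_mul, mul_assoc, hTdA, mul_zero, sub_zero]
  have hTdE : Td*(A*Pd) = 0 := by rw [← mul_assoc, hTdA, zero_mul]
  have hWE : W*(A*Pd) = A*Pd := by
    rw [hW, sub_mul, one_mul, mul_assoc, hTdE, mul_zero, sub_zero]
  have hWT : W*T = T*W := by rw [hW, sub_mul, mul_sub, one_mul, mul_one, mul_assoc, ← hTTd]
  have hWTTd : W*(T*Td) = 0 := by rw [hW, sub_mul, one_mul, hTTd2, sub_self]
  have hTdW : Td*W = 0 := by rw [hW, mul_sub, mul_one, ← mul_assoc, hTdTTd, sub_self]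
  -- power lemmas
  have e6 : A*Pd*Pd = Pd := by rw [hAPd]; exact hPdAPd
  have e8 : ∀ k : ℕ, A*Pd^(k+2) = Pd^(k+1) := by
    intro k
    rw [pow_succ' Pd (k+1), pow_succ' Pd k, ← mul_assoc, ← mul_assoc, e6]
  have p1 : ∀ k : ℕ, C*Pd^(k+1) = 0 := fun k => by
    rw [pow_succ' Pd k, ← mul_assoc, hCPd, zero_mul]
  have p2 : ∀ k : ℕ, T*Pd^(k+1) = 0 := fun k => by
    rw [pow_succ' Pd k, ← mul_assoc, hTPd, zero_mul]
  have p3 : ∀ k : ℕ, Td*Pd^(k+1) = 0 := fun k => by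
    rw [pow_succ' Pd k, ← mul_assoc, hTdPd, zero_mul]
  have p4 : ∀ k : ℕ, W*Pd^(k+1) = Pd^(k+1) := fun k => by
    rw [pow_succ' Pd k, ← mul_assoc, hWPd]
  have t1 : ∀ k : ℕ, C*(T^k*A) = 0 := by
    intro k
    cases k with
    | zero => rw [pow_zero, one_mul, hCA]
    | succ n => rw [pow_succ, mul_assoc, hTA, mul_zero, mul_zero]
  have t2 : ∀ k : ℕ, C*(T^k*C) = 0 := by
    intro k
    cases k with
    | zero => rw [pow_zero, one_mul, hCC]
    | succ n => rw [pow_succ, mul_assoc, hTC, mul_zero, mul_zero]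
  have hTE : T*(A*Pd) = 0 := by rw [← mul_assoc, hTA, zero_mul]
  have hCE : C*(A*Pd) = 0 := by rw [← mul_assoc, hCA, zero_mul]
  have t3 : ∀ k : ℕ, C*(T^k*(A*Pd)) = 0 := by
    intro k
    cases k with
    | zero => rw [pow_zero, one_mul, hCE]
    | succ n => rw [pow_succ, mul_assoc, hTE, mul_zero, mul_zero]
  have t4 : ∀ k : ℕ, C*(T^k*Pd) = 0 := by
    intro k
    cases k with
    | zero => rw [pow_zero, one_mul, hCPd]
    | succ n => rw [pow_succ, mul_assoc, hTPd, mul_zero, mul_zero]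
  -- Y lemmas
  have hCY : C*Y = 0 := by
    rw [hY, Finset.mul_sum]
    exact Finset.sum_eq_zero fun k _ => by rw [← mul_assoc, p1 k, zero_mul]
  have hTY : T*Y = 0 := by
    rw [hY, Finset.mul_sum]
    exact Finset.sum_eq_zero fun k _ => by rw [← mul_assoc, p2 k, zero_mul]
  have hTdY : Td*Y = 0 := by
    rw [hY, Finset.mul_sum]
    exact Finset.sum_eq_zero fun k _ => by rw [← mul_assoc, p3 k, zero_mul]
  have hWY : W*Y = Y := by
    rw [hY, Finset.mul_sum]
    exact Finset.sum_congr rfl fun k _ => by rw [← mul_assoc, p4 k]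
  have t5 : ∀ k : ℕ, C*(T^k*Y) = 0 := by
    intro k
    cases k with
    | zero => rw [pow_zero, one_mul, hCY]
    | succ n => rw [pow_succ, mul_assoc, hTY, mul_zero, mul_zero]
  -- S₂ lemmas
  have hAS₂ : A*S₂ = Y := by
    rw [hS₂, hY, Finset.mul_sum]
    exact Finset.sum_congr rfl fun k _ => by rw [← mul_assoc, e8 k]
  have hCS₂ : C*S₂ = 0 := by
    rw [hS₂, Finset.mul_sum]
    refine Finset.sum_eq_zero fun k _ => ?_
    rw [← mul_assoc, p1 (k+1), zero_mul]
  have hTS₂ : T*S₂ = 0 := by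
    rw [hS₂, Finset.mul_sum]
    refine Finset.sum_eq_zero fun k _ => ?_
    rw [← mul_assoc, p2 (k+1), zero_mul]
  have hS₂A : S₂*A = 0 := by
    rw [hS₂, Finset.sum_mul]
    refine Finset.sum_eq_zero fun k _ => ?_
    simp only [mul_assoc]
    rw [hWA, t1 k, mul_zero]
  have hS₂C : S₂*C = 0 := by
    rw [hS₂, Finset.sum_mul]
    refine Finset.sum_eq_zero fun k _ => ?_
    simp only [mul_assoc]
    rw [hWC, t2 k, mul_zero]
  have hS₂E : S₂*(A*Pd) = 0 := by
    rw [hS₂, Finset.sum_mul]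
    refine Finset.sum_eq_zero fun k _ => ?_
    simp only [mul_assoc]
    rw [hWE, t3 k, mul_zero]
  have hS₂Y : S₂*Y = 0 := by
    rw [hS₂, Finset.sum_mul]
    refine Finset.sum_eq_zero fun k _ => ?_
    simp only [mul_assoc]
    rw [hWY, t5 k, mul_zero]
  have hS₂TTd : S₂*(T*Td) = 0 := by
    rw [hS₂, Finset.sum_mul]
    refine Finset.sum_eq_zero fun k _ => ?_
    simp only [mul_assoc]
    rw [hWTTd, mul_zero, mul_zero, mul_zero]
  have hSsh : S₂*T = ∑ k ∈ Finset.range g, Pd^(k+1+1)*(C*(T^(k+1)*W)) := by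
    rw [hS₂, Finset.sum_mul]
    refine Finset.sum_congr rfl fun k _ => ?_
    simp only [mul_assoc]
    rw [hWT, ← mul_assoc (T^k) T W, ← pow_succ]
  -- misc product lemmas
  have hAPdCTd : A*(Pd*C*Td) = C*Td := by
    rw [← mul_assoc, hEC]
  have hCPdCTd : C*(Pd*C*Td) = 0 := by
    rw [← mul_assoc, ← mul_assoc, hCPd, zero_mul, zero_mul]
  have hTPdCTd : T*(Pd*C*Td) = 0 := by
    rw [← mul_assoc, ← mul_assoc, hTPd, zero_mul, zero_mul]
  have hPdCTdA : Pd*C*Td*A = 0 := by rw [mul_assoc, hTdA, mul_zero]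
  have hPdCTdC : Pd*C*Td*C = 0 := by rw [mul_assoc, hTdC, mul_zero]
  have hPdCTdT : Pd*C*Td*T = Pd*(C*(T*Td)) := by rw [mul_assoc, ← hTTd, mul_assoc]
  have hPdCTdE : Pd*C*Td*(A*Pd) = 0 := by rw [mul_assoc, hTdE, mul_zero]
  have hPdCTdY : Pd*C*Td*Y = 0 := by rw [mul_assoc, hTdY, mul_zero]
  have hPdCTdTTd : Pd*C*Td*(T*Td) = Pd*C*Td := by rw [mul_assoc, hTdTTd']
  have hPdE : Pd*(A*Pd) = Pd := by rw [← mul_assoc, hPdAPd]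
  have hPdY : Pd*Y = S₂ := by
    rw [hY, hS₂, Finset.mul_sum]
    refine Finset.sum_congr rfl fun k _ => ?_
    rw [← mul_assoc, ← pow_succ']
  have hPdTTd : Pd*(T*Td) = 0 := by rw [← mul_assoc, hPdT, zero_mul]
  -- N*M
  have hNM : N*M = A*Pd + Y + T*Td := by
    rw [hN, hM]
    simp only [mul_add, add_mul, mul_sub]
    rw [hAS₂, hAPdCTd, hATd, hCPd, hCS₂, hCPdCTd, hTPd, hTS₂, hTPdCTd]
    abel
  -- shift-sum identity
  have h1 := Finset.sum_range_succ' (fun k => Pd^(k+1)*(C*(T^k*W))) g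
  have h2 := Finset.sum_range_succ (fun k => Pd^(k+1)*(C*(T^k*W))) g
  simp only [zero_add, pow_one, pow_zero, one_mul] at h1 h2
  rw [← hY] at h2
  have h5 : (∑ k ∈ Finset.range g, Pd^(k+1+1)*(C*(T^(k+1)*W))) + Pd*(C*W)
      = Y + Pd^(g+1)*(C*(T^g*W)) := h1.symm.trans h2
  have tW' : ∀ m, g ≤ m → T^m*W = 0 := by
    intro m hm
    obtain ⟨j, rfl⟩ : ∃ j, m = j+g := ⟨m-g, by omega⟩
    rw [pow_add, mul_assoc, hgT, mul_zero]
  have hfg : Pd^(g+1)*(C*(T^g*W)) = 0 := by rw [tW' g le_rfl, mul_zero, mul_zero]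
  rw [hfg, add_zero] at h5
  have hf0 : Pd*(C*W) = Pd*C - Pd*(C*(T*Td)) := by rw [hW, mul_sub, mul_one, mul_sub]
  -- M*N
  have hMN : M*N = A*Pd + Y + T*Td := by
    rw [hM, hN]
    simp only [add_mul, sub_mul, mul_add]
    rw [← hAPd, hPdT, hS₂A, hS₂C, hSsh, hPdCTdA, hPdCTdC, hPdCTdT, hTdA, hTdC, ← hTTd]
    rw [← h5, hf0]
    abel
  -- M*(N*M) = M
  have hMNM : M*(A*Pd + Y + T*Td) = M := by
    conv_lhs => rw [hM]
    simp only [add_mul, sub_mul, mul_add]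
    rw [hPdE, hPdY, hPdTTd, hS₂E, hS₂Y, hS₂TTd, hPdCTdE, hPdCTdY, hPdCTdTTd,
      hTdE, hTdY, hTdTTd', hM]
    abel
  -- the power formula
  have cA2 : ∀ k : ℕ, C*A^(k+1) = 0 := fun k => by
    rw [pow_succ', ← mul_assoc, hCA, zero_mul]
  have tA2 : ∀ k : ℕ, T*A^(k+1) = 0 := fun k => by
    rw [pow_succ', ← mul_assoc, hTA, zero_mul]
  have hAT2 : ∀ k : ℕ, A*T^(k+1) = 0 := fun k => by
    rw [pow_succ', ← mul_assoc, hAT, zero_mul]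
  have hCblock : ∀ i j : ℕ, C*(A^i*(C*T^j)) = 0 := by
    intro i j
    cases i with
    | zero => rw [pow_zero, one_mul, ← mul_assoc, hCC, zero_mul]
    | succ n => rw [← mul_assoc, cA2 n, zero_mul]
  have hTblock : ∀ i j : ℕ, T*(A^i*(C*T^j)) = 0 := by
    intro i j
    cases i with
    | zero => rw [pow_zero, one_mul, ← mul_assoc, hTC, zero_mul]
    | succ n => rw [← mul_assoc, tA2 n, zero_mul]
  have powN : ∀ m : ℕ, N^(m+1)
      = A^(m+1) + (∑ j ∈ Finset.range (m+1), A^(m-j)*(C*T^j)) + T^(m+1) := by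
    intro m
    induction m with
    | zero =>
      rw [hN]
      simp
    | succ n ih =>
      conv_lhs => rw [pow_succ', ih, hN]
      simp only [mul_add, add_mul, Finset.mul_sum]
      rw [Finset.sum_add_distrib, Finset.sum_add_distrib]
      have hsum : (∑ j ∈ Finset.range (n+1), A*(A^(n-j)*(C*T^j)))
          = ∑ j ∈ Finset.range (n+1), A^(n+1-j)*(C*T^j) := by
        refine Finset.sum_congr rfl fun j hj => ?_
        rw [← mul_assoc, ← pow_succ',
          show n-j+1 = n+1-j by have := Finset.mem_range.mp hj; omega]
      rw [hsum, cA2 n, tA2 n, hAT2 n,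
        Finset.sum_eq_zero fun j (_ : j ∈ Finset.range (n+1)) => hCblock (n-j) j,
        Finset.sum_eq_zero fun j (_ : j ∈ Finset.range (n+1)) => hTblock (n-j) j]
      simp only [← pow_succ']
      rw [Finset.sum_range_succ (fun j => A^(n+1-j)*(C*T^j)) (n+1), Nat.sub_self,
        pow_zero, one_mul]
      abel
  have powN' : N^(g+2) = A^(g+2) + (∑ j ∈ Finset.range (g+2), A^(g+1-j)*(C*T^j)) + T^(g+2) :=
    powN (g+1)
  -- power-of-index helpers
  have a1' : ∀ m, 2 ≤ m → A^m*Pd = A^(m-1) := by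
    intro m hm
    obtain ⟨i, rfl⟩ : ∃ i, m = i+2 := ⟨m-2, by omega⟩
    rw [show i+2-1 = i+1 by omega]
    rw [pow_succ, pow_succ, mul_assoc, mul_assoc, ← mul_assoc A A Pd, hAAPd, ← pow_succ]
  have a2' : ∀ k m : ℕ, k ≤ m → A^(m+1)*Pd^k = A^(m+1-k) := by
    intro k
    induction k with
    | zero => intro m _; rw [pow_zero, mul_one, Nat.sub_zero]
    | succ n ih =>
      intro m hm
      obtain ⟨m', rfl⟩ : ∃ m', m = m'+1 := ⟨m-1, by omega⟩
      rw [pow_succ' Pd n, ← mul_assoc, a1' (m'+1+1) (by omega),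
        show m'+1+1-1 = m'+1 by omega, ih m' (by omega),
        show m'+1-n = m'+1+1-(n+1) by omega]
  have hAT' : ∀ m, 1 ≤ m → A^m*T = 0 := by
    intro m hm
    obtain ⟨n, rfl⟩ : ∃ n, m = n+1 := ⟨m-1, by omega⟩
    rw [pow_succ, mul_assoc, hAT, mul_zero]
  have tA' : ∀ m, 1 ≤ m → T^m*A = 0 := by
    intro m hm
    obtain ⟨n, rfl⟩ : ∃ n, m = n+1 := ⟨m-1, by omega⟩
    rw [pow_succ, mul_assoc, hTA, mul_zero]
  have pT' : ∀ m, 1 ≤ m → T^m*Pd = 0 := by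
    intro m hm
    obtain ⟨n, rfl⟩ : ∃ n, m = n+1 := ⟨m-1, by omega⟩
    rw [pow_succ, mul_assoc, hTPd, mul_zero]
  have h0 : T^(g+1)*Td = T^g := by
    have h := hgT
    rw [hW, mul_sub, mul_one, sub_eq_zero, ← mul_assoc, ← pow_succ] at h
    exact h.symm
  have tTd' : ∀ m, g ≤ m → T^(m+1)*Td = T^m := by
    intro m hm
    obtain ⟨j, rfl⟩ : ∃ j, m = j+g := ⟨m-g, by omega⟩
    rw [show j+g+1 = j+(g+1) by omega, pow_add, mul_assoc, h0, ← pow_add]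
  -- the three pieces of N^(g+2)*(N*M)
  have hNE2 : N^(g+2)*(A*Pd) = A^(g+2) := by
    rw [powN', add_mul, add_mul, Finset.sum_mul]
    have hA : A^(g+2)*(A*Pd) = A^(g+2) := by
      rw [← mul_assoc, ← pow_succ, a1' (g+2+1) (by omega), show g+2+1-1 = g+2 by omega]
    rw [hA, Finset.sum_eq_zero fun j (_ : j ∈ Finset.range (g+2)) => by
        simp only [mul_assoc]; rw [t3 j, mul_zero],
      ← mul_assoc, tA' (g+2) (by omega), zero_mul]
    abel
  have hNPd : N^(g+2)*Pd = A^(g+1) := by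
    rw [powN', add_mul, add_mul, Finset.sum_mul]
    rw [a1' (g+2) (by omega), show g+2-1 = g+1 by omega,
      Finset.sum_eq_zero fun j (_ : j ∈ Finset.range (g+2)) => by
        simp only [mul_assoc]; rw [t4 j, mul_zero],
      pT' (g+2) (by omega)]
    abel
  have hNPdpow : ∀ k, k < g → N^(g+2)*Pd^(k+1) = A^(g+1-k) := by
    intro k hk
    rw [pow_succ' Pd k, ← mul_assoc, hNPd, a2' k g (by omega)]
  have hNY2 : N^(g+2)*Y = ∑ k ∈ Finset.range g, A^(g+1-k)*(C*(T^k*W)) := by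
    rw [hY, Finset.mul_sum]
    refine Finset.sum_congr rfl fun k hk => ?_
    rw [← mul_assoc, hNPdpow k (Finset.mem_range.mp hk)]
  have hNTTd : N^(g+2)*(T*Td)
      = (∑ j ∈ Finset.range (g+2), A^(g+1-j)*(C*(T^(j+1)*Td))) + T^(g+2) := by
    rw [powN', add_mul, add_mul, Finset.sum_mul]
    rw [← mul_assoc, hAT' (g+2) (by omega), zero_mul,
      Finset.sum_congr rfl fun j (_ : j ∈ Finset.range (g+2)) => by
        simp only [mul_assoc]
        rw [← mul_assoc (T^j) T Td, ← pow_succ]]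
    rw [← mul_assoc, ← pow_succ, tTd' (g+2) (by omega)]
    abel
  -- the final sum identity
  have hsplitsum : (∑ j ∈ Finset.range (g+2), A^(g+1-j)*(C*T^j))
      = (∑ k ∈ Finset.range g, A^(g+1-k)*(C*(T^k*W)))
        + ∑ j ∈ Finset.range (g+2), A^(g+1-j)*(C*(T^(j+1)*Td)) := by
    have hterm : ∀ j : ℕ, A^(g+1-j)*(C*T^j)
        = A^(g+1-j)*(C*(T^j*W)) + A^(g+1-j)*(C*(T^(j+1)*Td)) := by
      intro j
      rw [hW, mul_sub, mul_one, ← mul_assoc (T^j) T Td, ← pow_succ, mul_sub C, mul_sub]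
      abel
    rw [Finset.sum_congr rfl fun j (_ : j ∈ Finset.range (g+2)) => hterm j,
      Finset.sum_add_distrib]
    congr 1
    rw [Finset.sum_range_succ, Finset.sum_range_succ,
      tW' (g+1) (by omega), tW' g le_rfl]
    simp
  -- condition 3
  have cond3 : N^(g+3)*M = N^(g+2) := by
    have hstep : N^(g+3) = N^(g+2)*N := by rw [← pow_succ]
    rw [hstep, mul_assoc, hNM, mul_add, mul_add, hNE2, hNY2, hNTTd, powN', hsplitsum]
    abel
  exact ⟨hNM.trans hMN.symm, by rw [mul_assoc, hNM, hMNM], cond3⟩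


theorem stmt_7 {d : ℕ} (P Q R S N Pd T Td : Matrix (Fin d) (Fin d) ℂ)
    (hN : N = P + Q + R + S)
    (hPQ : P * Q = 0) (hQP : Q * P = 0)
    (hPS : P * S = 0) (hSQ : S * Q = 0) (hQR : Q * R = 0) (hRP : R * P = 0)
    (hSP : S * P = 0) (hSR : S * R = 0)
    (hPd : IsDrazinInverse P Pd)
    (hT : T = (S + Q) + (1 - P * Pd) * (R + P))
    (hTd : IsDrazinInverse T Td)
    (g : ℕ) (hg : 1 ≤ g)
    -- `g ≥ ind T`
    (hgT : T ^ g * (1 - T * Td) = 0) :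
    IsDrazinInverse N
      (Pd +
        ((∑ k ∈ Finset.range g, Pd ^ (k + 2) * R * T ^ k * (1 - T * Td))
          - Pd * R * Td)
        + Td) := by
  obtain ⟨hPc, hPdd, kP, hPk⟩ := hPd
  obtain ⟨hTc, hTdd, kT, hTk⟩ := hTd
  -- basic rewriting helpers for words in P, Pd
  have mPPdPd : P * Pd * Pd = Pd := by rw [hPc]; exact hPdd
  have sw : ∀ x : Matrix (Fin d) (Fin d) ℂ, Pd*(P*x) = P*(Pd*x) := fun x => by
    rw [← mul_assoc, ← hPc, mul_assoc]
  have ct : ∀ x : Matrix (Fin d) (Fin d) ℂ, P*(Pd*(Pd*x)) = Pd*x := fun x => by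
    rw [← mul_assoc, ← mul_assoc, mPPdPd]
  have ct0 : P*(Pd*Pd) = Pd := by rw [← mul_assoc, mPPdPd]
  have z : ∀ {a b : Matrix (Fin d) (Fin d) ℂ}, a*b = 0 →
      ∀ x : Matrix (Fin d) (Fin d) ℂ, a*(b*x) = 0 := fun h x => by
    rw [← mul_assoc, h, zero_mul]
  -- derived annihilation facts
  have mRPd : R * Pd = 0 := by
    conv_lhs => rw [← hPdd, ← hPc, mul_assoc]
    rw [← mul_assoc, hRP, zero_mul]
  have mQPd : Q * Pd = 0 := by
    conv_lhs => rw [← hPdd, ← hPc, mul_assoc]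
    rw [← mul_assoc, hQP, zero_mul]
  have mSPd : S * Pd = 0 := by
    conv_lhs => rw [← hPdd, ← hPc, mul_assoc]
    rw [← mul_assoc, hSP, zero_mul]
  have mPdQ : Pd * Q = 0 := by
    conv_lhs => rw [← hPdd, mul_assoc Pd P Pd, hPc]
    rw [mul_assoc, mul_assoc, hPQ, mul_zero, mul_zero]
  have mPdS : Pd * S = 0 := by
    conv_lhs => rw [← hPdd, mul_assoc Pd P Pd, hPc]
    rw [mul_assoc, mul_assoc, hPS, mul_zero, mul_zero]
  -- hypotheses of the abstract lemma, with A := P*P*Pd, C := P*Pd*R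
  have hCA : (P*Pd*R)*(P*P*Pd) = 0 := by
    simp only [mul_assoc]
    simp [z hRP]
  have hTA : T*(P*P*Pd) = 0 := by
    rw [hT]
    simp only [mul_add, add_mul, mul_sub, sub_mul, mul_one, one_mul, mul_assoc]
    simp [z hSP, z hQP, z hRP, sw, ct, ct0, ← hPc]
  have hAT : (P*P*Pd)*T = 0 := by
    rw [hT]
    simp only [mul_add, add_mul, mul_sub, sub_mul, mul_one, one_mul, mul_assoc]
    simp [z mPdS, z mPdQ, mPdS, mPdQ, sw, ct, ct0, ← hPc]
  have hTC : T*(P*Pd*R) = 0 := by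
    rw [hT]
    simp only [mul_add, add_mul, mul_sub, sub_mul, mul_one, one_mul, mul_assoc]
    simp [z hSP, z hQP, z hRP, sw, ct, ct0, ← hPc]
  have hCC : (P*Pd*R)*(P*Pd*R) = 0 := by
    simp only [mul_assoc]
    simp [z hRP]
  have hAPd : (P*P*Pd)*Pd = Pd*(P*P*Pd) := by
    simp only [mul_assoc]
    simp [sw, ct, ct0]
  have hPdAPd : Pd*(P*P*Pd)*Pd = Pd := by
    simp only [mul_assoc]
    simp [sw, ct, ct0]
  have hAAPd : (P*P*Pd)*(P*P*Pd)*Pd = P*P*Pd := by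
    simp only [mul_assoc]
    simp [sw, ct, ct0]
  have hCPd : (P*Pd*R)*Pd = 0 := by
    simp only [mul_assoc]
    simp [z mRPd, mRPd]
  have hPdT : Pd*T = 0 := by
    rw [hT]
    simp only [mul_add, add_mul, mul_sub, sub_mul, mul_one, one_mul, mul_assoc]
    simp [z mPdS, z mPdQ, mPdS, mPdQ, sw, ct, ct0, ← hPc]
  have hTPd : T*Pd = 0 := by
    rw [hT]
    simp only [mul_add, add_mul, mul_sub, sub_mul, mul_one, one_mul, mul_assoc]
    simp [z mSPd, z mQPd, z mRPd, mSPd, mQPd, mRPd, sw, ct, ct0, ← hPc]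
  have hEC : (P*P*Pd)*(Pd*(P*Pd*R)) = P*Pd*R := by
    simp only [mul_assoc]
    simp [sw, ct, ct0]
  -- N = A + C + T
  have hPdP2 : P*Pd*P = P*P*Pd := by rw [mul_assoc, ← hPc, ← mul_assoc]
  have hNeq : N = P*P*Pd + P*Pd*R + T := by
    rw [hN, hT]
    rw [show (1-P*Pd)*(R+P) = R + P - P*Pd*R - P*P*Pd by
      rw [sub_mul, one_mul, mul_add, hPdP2]; abel]
    abel
  -- M in terms of C
  have hPdC : Pd*(P*Pd*R) = Pd*R := by rw [← mul_assoc, ← mul_assoc, hPdd]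
  have h5 : ∀ k : ℕ, Pd^(k+2)*(P*Pd*R) = Pd^(k+2)*R := by
    intro k
    rw [pow_succ, mul_assoc, hPdC, ← mul_assoc]
  have hMeq : (Pd + ((∑ k ∈ Finset.range g, Pd^(k+2)*R*T^k*(1-T*Td)) - Pd*R*Td) + Td)
      = Pd + ((∑ k ∈ Finset.range g, Pd^(k+2)*(P*Pd*R)*T^k*(1-T*Td)) - Pd*(P*Pd*R)*Td) + Td := by
    have hss : (∑ k ∈ Finset.range g, Pd^(k+2)*(P*Pd*R)*T^k*(1-T*Td))
        = ∑ k ∈ Finset.range g, Pd^(k+2)*R*T^k*(1-T*Td) :=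
      Finset.sum_congr rfl fun k _ => by rw [h5 k]
    rw [hPdC, ← hss]
  have main := aux_main (P*P*Pd) (P*Pd*R) T Pd Td N
      (Pd + ((∑ k ∈ Finset.range g, Pd^(k+2)*R*T^k*(1-T*Td)) - Pd*R*Td) + Td) g
      hCA hTA hAT hTC hCC hAPd hPdAPd hAAPd hCPd hPdT hTPd hEC hTc hTdd hgT hNeq hMeq
  exact ⟨main.1, main.2.1, ⟨g+2, main.2.2⟩⟩
end

section
/- Let P, Q, R, S be n×n complex matrices with PQ = QP = 0, PS = SQ = QR = RP = 0, SP = SR = 0, and with R and S nilpotent (so R^d = S^d = 0), and let N = P+Q+R+S. Let T = (S+Q) + P^π(R+P), let g be a positive integer with g ≥ ind(T), let l be a positive integer with l ≥ max(ind(S), ind(Q)), and let n be a positive integer with n ≥ max(ind(S+Q), ind(P^π(R+P))). Then N^d = P^d + X + T^d, where T^d = P^π·Σ_{j=0}^{n−1} Σ_{k=0}^{j} P^k R^{j−k}·Σ_{h=0}^{l−1} (Q^d)^{h+j+1} S^h is the Drazin inverse of T, and X = Σ_{k=0}^{g−1} (P^d)^{k+2} R T^k T^π − P^d·Σ_{j=0}^{n−1}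 R^{j+1}·Σ_{h=0}^{l−1} (Q^d)^{h+j+1} S^h. -/
open Matrix Finset

section RingLemmas
open MulOpposite

variable {R : Type*} [Ring R]

/-- Ring-level Drazin inverse predicate. -/
def DI (a x : R) : Prop :=
  a * x = x * a ∧ x * a * x = x ∧ ∃ k : ℕ, a ^ (k + 1) * x = a ^ k

lemma kill_assoc {x y : R} (h : x * y = 0) (z : R) : x * (y * z) = 0 := by
  rw [← mul_assoc, h, zero_mul]

lemma pow_mul_pow_eq_zero {x y : R} (h : x * y = 0) (s t : ℕ) :
    x ^ (s + 1) * y ^ (t + 1) = 0 := by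
  rw [pow_succ, pow_succ', mul_assoc, ← mul_assoc x y, h, zero_mul, mul_zero]

/-- from `a^(k+1) * x = a^k`: `a^(s+1) * x = a^s` for `s ≥ k`. -/
lemma pow_succ_mul_of_ge {a x : R} {k : ℕ} (h : a ^ (k + 1) * x = a ^ k)
    {s : ℕ} (hs : k ≤ s) : a ^ (s + 1) * x = a ^ s := by
  obtain ⟨t, rfl⟩ := Nat.exists_eq_add_of_le hs
  rw [show k + t + 1 = t + (k + 1) by ring, pow_add, mul_assoc, h, ← pow_add,
    Nat.add_comm]

lemma pi_pow_of_ge {a x : R} {m : ℕ} (h : a ^ m * (1 - a * x) = 0)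
    {s : ℕ} (hs : m ≤ s) : a ^ s * (1 - a * x) = 0 := by
  obtain ⟨t, rfl⟩ := Nat.exists_eq_add_of_le hs
  rw [Nat.add_comm, pow_add, mul_assoc, h, mul_zero]

namespace DI

lemma comm {a x : R} (h : DI a x) : a * x = x * a := h.1

lemma commute {a x : R} (h : DI a x) : Commute a x := h.1

lemma mid {a x : R} (h : DI a x) : x * a * x = x := h.2.1

/-- `x = x^2 * a` -/
lemma eq_sq_mul {a x : R} (h : DI a x) : x = x * x * a := by
  conv_lhs => rw [← h.mid]
  rw [mul_assoc, h.comm, ← mul_assoc]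

/-- `x = a * x^2` -/
lemma eq_mul_sq {a x : R} (h : DI a x) : x = a * (x * x) := by
  conv_lhs => rw [← h.mid]
  rw [← h.comm, mul_assoc]

lemma mul_eq_zero_right {a x b : R} (h : DI a x) (hab : a * b = 0) : x * b = 0 := by
  rw [h.eq_sq_mul, mul_assoc, hab, mul_zero]

lemma mul_eq_zero_left {a x b : R} (h : DI a x) (hab : b * a = 0) : b * x = 0 := by
  rw [h.eq_mul_sq, ← mul_assoc, hab, zero_mul]

end DI

section Unique

variable {a x y : R}

private lemma aux_xaxs (hx : DI a x) : ∀ s : ℕ, x * (a * x) ^ s = x := by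
  intro s
  induction s with
  | zero => simp
  | succ s ih => rw [pow_succ, ← mul_assoc, ih, ← mul_assoc, hx.mid]

private lemma aux_axsx (hx : DI a x) : ∀ s : ℕ, (a * x) ^ s * x = x := by
  have hxx : a * x * x = x := by rw [hx.comm, hx.mid]
  intro s
  induction s with
  | zero => simp
  | succ s ih => rw [pow_succ, mul_assoc, hxx, ih]

private lemma aux_pow_pow (hx : DI a x) {k : ℕ} (hk : a ^ (k + 1) * x = a ^ k)
    {m : ℕ} (hm : k ≤ m) : ∀ j : ℕ, a ^ (m + j) * x ^ j = a ^ m := by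
  intro j
  induction j with
  | zero => simp
  | succ j ih =>
    rw [pow_succ' x, show m + (j+1) = (m+j) +1 by ring, ← mul_assoc,
      pow_succ_mul_of_ge hk (le_trans hm (Nat.le_add_right m j)), ih]

lemma DI.unique (hx : DI a x) (hy : DI a y) : x = y := by
  obtain ⟨kx, hkx⟩ := hx.2.2
  obtain ⟨ky, hky⟩ := hy.2.2
  set m0 := max kx ky with hm0
  set m := m0 + 1 with hm
  have hxm : a ^ (m + m) * x ^ m = a ^ m :=
    aux_pow_pow hx hkx (le_trans (Nat.le_max_left _ _) (Nat.le_succ _)) m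
  have hym : a ^ (m + m) * y ^ m = a ^ m :=
    aux_pow_pow hy hky (le_trans (Nat.le_max_right _ _) (Nat.le_succ _)) m
  have cax : Commute a x := hx.commute
  have cay : Commute a y := hy.commute
  have hF : (a * y) * (a * y) = a * y := by
    rw [mul_assoc, ← mul_assoc y a y, hy.mid]
  have hE : (a * x) * (a * x) = a * x := by
    rw [mul_assoc, ← mul_assoc x a x, hx.mid]
  have hFm : ∀ s : ℕ, (a * y) ^ (s + 1) = a * y := by
    intro s; induction s with
    | zero => simp
    | succ s ih => rw [pow_succ, ih, hF]
  have hEm : ∀ s : ℕ, (a * x) ^ (s + 1) = a * x := by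
    intro s; induction s with
    | zero => simp
    | succ s ih => rw [pow_succ, ih, hE]
  have h1 : x = x ^ (m + 1) * a ^ m := by
    calc x = x * (a * x) ^ m := (aux_xaxs hx m).symm
    _ = x * (a ^ m * x ^ m) := by rw [cax.mul_pow]
    _ = x * (x ^ m * a ^ m) := by rw [(cax.pow_pow m m).eq]
    _ = x ^ (m + 1) * a ^ m := by rw [← mul_assoc, ← pow_succ']
  have h3 : x = x * (a * y) := by
    calc x = x ^ (m + 1) * a ^ m := h1
    _ = x ^ (m + 1) * (a ^ (m + m) * y ^ m) := by rw [hym]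
    _ = (x ^ (m + 1) * a ^ m) * (a ^ m * y ^ m) := by
        rw [pow_add a m m]; simp only [mul_assoc]
    _ = x * (a * y) ^ m := by rw [← h1, cay.mul_pow]
    _ = x * (a * y) := by rw [hm, hFm m0]
  have h4 : y = (a * x) * y := by
    have haux : (a ^ m * y ^ m) * y = y := by
      rw [← cay.mul_pow, aux_axsx hy]
    calc y = (a ^ m * y ^ m) * y := haux.symm
    _ = ((a ^ (m + m) * x ^ m) * y ^ m) * y := by rw [hxm]
    _ = ((x ^ m * a ^ (m + m)) * y ^ m) * y := by rw [(cax.pow_pow (m+m) m).eq]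
    _ = x ^ m * (a ^ m * ((a ^ m * y ^ m) * y)) := by
        rw [pow_add a m m]; simp only [mul_assoc]
    _ = x ^ m * (a ^ m * y) := by rw [haux]
    _ = (x ^ m * a ^ m) * y := by rw [mul_assoc]
    _ = (a * x) ^ m * y := by rw [cax.mul_pow, (cax.pow_pow m m).eq]
    _ = (a * x) * y := by rw [hm, hEm m0]
  calc x = x * (a * y) := h3
  _ = (x * a) * y := by rw [mul_assoc]
  _ = (a * x) * y := by rw [hx.comm]
  _ = y := h4.symm

end Unique


lemma geom_pow {a b : R} (hab : a * b = 0) (k : ℕ) :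
    (a + b) ^ k = ∑ i ∈ range (k + 1), b ^ i * a ^ (k - i) := by
  induction k with
  | zero => simp
  | succ k ih =>
    have hA : a * ∑ i ∈ range (k + 1), b ^ i * a ^ (k - i) = a ^ (k + 1) := by
      rw [Finset.mul_sum,
        Finset.sum_eq_single_of_mem 0 (mem_range.2 (Nat.succ_pos k))]
      · rw [pow_zero, one_mul, Nat.sub_zero, ← pow_succ']
      · intro i _ hne
        obtain ⟨j, rfl⟩ := Nat.exists_eq_succ_of_ne_zero hne
        rw [pow_succ', ← mul_assoc, ← mul_assoc, hab, zero_mul, zero_mul]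
    rw [pow_succ', ih, add_mul, hA, Finset.mul_sum]
    conv_rhs => rw [Finset.sum_range_succ']
    simp only [pow_zero, one_mul, Nat.sub_zero, Nat.succ_sub_succ]
    rw [add_comm]
    congr 1
    apply Finset.sum_congr rfl
    intro i _
    rw [← mul_assoc, ← pow_succ']


lemma di_add_nil {a b ad : R} (n : ℕ)
    (hab : a * b = 0) (hbm : b ^ (n + 1) = 0)
    (hc : a * ad = ad * a) (hi : ad * a * ad = ad)
    (hpi : a ^ (n + 1) * (1 - a * ad) = 0) :
    DI (a + b) (∑ i ∈ range (n + 1), b ^ i * ad ^ (i + 1)) := by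
  set W := ∑ i ∈ range (n + 1), b ^ i * ad ^ (i + 1) with hW
  have hade : ad * (a * ad) = ad := by rw [← mul_assoc, hi]
  have hadsq : ad = ad * ad * a := by rw [mul_assoc, ← hc, ← mul_assoc, hi]
  have hadb : ad * b = 0 := by
    conv_lhs => rw [hadsq]
    rw [mul_assoc (ad * ad) a b, hab, mul_zero]
  have hadpb : ∀ i : ℕ, ad ^ (i + 1) * b = 0 := by
    intro i; rw [pow_succ, mul_assoc, hadb, mul_zero]
  have habp : ∀ j : ℕ, a * b ^ (j + 1) = 0 := by
    intro j; rw [pow_succ', ← mul_assoc, hab, zero_mul]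
  have hbp : ∀ i : ℕ, n + 1 ≤ i → b ^ i = 0 := by
    intro i hi'
    obtain ⟨t, rfl⟩ := Nat.exists_eq_add_of_le hi'
    rw [pow_add, hbm, zero_mul]
  have hadpe : ∀ i : ℕ, ad ^ (i + 1) * (a * ad) = ad ^ (i + 1) := by
    intro i; rw [pow_succ, mul_assoc, hade]
  have hadpa : ∀ i : ℕ, ad ^ (i + 1) * a = ad ^ i * (a * ad) := by
    intro i; rw [pow_succ, mul_assoc, ← hc]
  have hstep : a ^ (n + 1 + 1) * ad = a ^ (n + 1) := by
    have h' := hpi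
    rw [mul_sub, mul_one, sub_eq_zero] at h'
    rw [pow_succ, mul_assoc, ← h']
  have hsa : ∀ s : ℕ, n + 1 ≤ s → a ^ (s + 1) * ad = a ^ s :=
    fun s hs => pow_succ_mul_of_ge hstep hs
  have com1 : (a + b) * W = a * ad + ∑ i ∈ range n, b ^ (i + 1) * ad ^ (i + 1) := by
    rw [add_mul, hW, Finset.mul_sum, Finset.mul_sum]
    congr 1
    · rw [Finset.sum_eq_single_of_mem 0 (mem_range.2 (Nat.succ_pos n))]
      · simp
      · intro i _ hne
        obtain ⟨j, rfl⟩ := Nat.exists_eq_succ_of_ne_zero hne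
        rw [← mul_assoc, habp j, zero_mul]
    · rw [Finset.sum_range_succ, ← mul_assoc, ← pow_succ', hbm, zero_mul, add_zero]
      apply Finset.sum_congr rfl
      intro i _
      rw [← mul_assoc, ← pow_succ']
  have com2 : W * (a + b) = a * ad + ∑ i ∈ range n, b ^ (i + 1) * ad ^ (i + 1) := by
    rw [mul_add, hW, Finset.sum_mul, Finset.sum_mul]
    have h2 : ∑ i ∈ range (n + 1), b ^ i * ad ^ (i + 1) * b = 0 := by
      apply Finset.sum_eq_zero; intro i _
      rw [mul_assoc, hadpb i, mul_zero]
    rw [h2, add_zero, Finset.sum_range_succ', add_comm]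
    congr 1
    · rw [pow_zero, one_mul, pow_one, ← hc]
    · apply Finset.sum_congr rfl
      intro i _
      rw [mul_assoc, hadpa (i + 1), hadpe i]
  have ax1 : (a + b) * W = W * (a + b) := by rw [com1, com2]
  have hWb : W * b = 0 := by
    rw [hW, Finset.sum_mul]
    apply Finset.sum_eq_zero; intro i _
    rw [mul_assoc, hadpb i, mul_zero]
  have hWe : W * (a * ad) = W := by
    rw [hW, Finset.sum_mul]
    apply Finset.sum_congr rfl; intro i _
    rw [mul_assoc, hadpe i]
  have ax2 : W * (a + b) * W = W := by
    rw [mul_assoc, com1, mul_add, hWe, Finset.mul_sum]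
    have hz : ∀ i ∈ range n, W * (b ^ (i + 1) * ad ^ (i + 1)) = 0 := by
      intro i _
      rw [pow_succ', mul_assoc, ← mul_assoc W b, hWb, zero_mul]
    rw [Finset.sum_eq_zero hz, add_zero]
  have ax3 : (a + b) ^ (2 * n + 1 + 1) * W = (a + b) ^ (2 * n + 1) := by
    rw [geom_pow hab, geom_pow hab, Finset.sum_mul, Finset.sum_range_succ]
    rw [Nat.sub_self, pow_zero, mul_one, hbp _ (by omega), zero_mul, add_zero]
    apply Finset.sum_congr rfl
    intro i hi
    rw [mem_range] at hi
    by_cases hin : i ≤ n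
    · have hs1 : 2 * n + 1 + 1 - i = (2 * n + 1 - i) + 1 := by omega
      have hs2 : n + 1 ≤ 2 * n + 1 - i := by omega
      rw [mul_assoc, hs1]
      congr 1
      rw [hW, Finset.mul_sum,
        Finset.sum_eq_single_of_mem 0 (mem_range.2 (Nat.succ_pos n))]
      · rw [pow_zero, one_mul, pow_one]; exact hsa _ hs2
      · intro j _ hne
        obtain ⟨t, rfl⟩ := Nat.exists_eq_succ_of_ne_zero hne
        rw [← mul_assoc, pow_mul_pow_eq_zero hab _ t, zero_mul]
    · rw [hbp i (by omega), zero_mul, zero_mul, zero_mul]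
  exact ⟨ax1, ax2, ⟨2 * n + 1, ax3⟩⟩

lemma di_add_grp {a b ad bd : R} (n : ℕ)
    (hab : a * b = 0)
    (hac : a * ad = ad * a) (hai : ad * a * ad = ad)
    (hapi : a ^ (n + 1) * (1 - a * ad) = 0)
    (hbc : b * bd = bd * b) (hbi : bd * b * bd = bd)
    (hbpi : b * (1 - b * bd) = 0) :
    DI (a + b) ((1 - b * bd) * ad
      + ∑ i ∈ range (n + 1), bd ^ (i + 1) * a ^ i * (1 - a * ad)) := by
  have caad : Commute a ad := hac
  have hea : (a * ad) * a = a * (a * ad) := (((Commute.refl a).mul_right caad).eq).symm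
  have hade : ad * (a * ad) = ad := by rw [← mul_assoc, hai]
  have hadsq : ad = ad * ad * a := by rw [mul_assoc, ← hac, ← mul_assoc, hai]
  have hadb : ad * b = 0 := by
    conv_lhs => rw [hadsq]
    rw [mul_assoc (ad * ad) a b, hab, mul_zero]
  have hbdsq : bd = b * (bd * bd) := by rw [← mul_assoc, hbc, hbi]
  have habd : a * bd = 0 := by
    conv_lhs => rw [hbdsq]
    rw [← mul_assoc, hab, zero_mul]
  have hadbd : ad * bd = 0 := by
    conv_lhs => rw [hbdsq]
    rw [← mul_assoc, hadb, zero_mul]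
  have hbf : b * (b * bd) = b := by
    have h' := hbpi
    rw [mul_sub, mul_one, sub_eq_zero] at h'
    exact h'.symm
  have hfb : (b * bd) * b = b := by rw [mul_assoc, ← hbc, hbf]
  have hfbd : (b * bd) * bd = bd := by rw [mul_assoc, ← hbdsq]
  have hbdf : bd * (b * bd) = bd := by rw [← mul_assoc, hbi]
  have hee : (a * ad) * (a * ad) = a * ad := by rw [mul_assoc, hade]
  have haf : a * (b * bd) = 0 := by rw [← mul_assoc, hab, zero_mul]
  have hadf : ad * (b * bd) = 0 := by rw [← mul_assoc, hadb, zero_mul]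
  have heb : (a * ad) * b = 0 := by rw [mul_assoc, hadb, mul_zero]
  have hebd : (a * ad) * bd = 0 := by rw [mul_assoc, hadbd, mul_zero]
  have hef : (a * ad) * (b * bd) = 0 := by rw [mul_assoc, hadf, mul_zero]
  have hapb : ∀ i : ℕ, a ^ (i + 1) * b = 0 := fun i => by
    rw [pow_succ, mul_assoc, hab, mul_zero]
  have hapf : ∀ i : ℕ, a ^ (i + 1) * (b * bd) = 0 := fun i => by
    rw [← mul_assoc, hapb i, zero_mul]
  have habdp : ∀ i : ℕ, a * bd ^ (i + 1) = 0 := fun i => by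
    rw [pow_succ', ← mul_assoc, habd, zero_mul]
  have hadbdp : ∀ i : ℕ, ad * bd ^ (i + 1) = 0 := fun i => by
    rw [pow_succ', ← mul_assoc, hadbd, zero_mul]
  have hfbdp : ∀ i : ℕ, (b * bd) * bd ^ (i + 1) = bd ^ (i + 1) := fun i => by
    rw [pow_succ', ← mul_assoc, hfbd]
  have hbbdp : ∀ i : ℕ, b * bd ^ (i + 1) = (b * bd) * bd ^ i := fun i => by
    rw [pow_succ', ← mul_assoc]
  have hbpf : ∀ i : ℕ, b ^ (i + 1) * (b * bd) = b ^ (i + 1) := fun i => by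
    rw [pow_succ, mul_assoc, hbf]
  have hbkbdk : ∀ t : ℕ, b ^ (t + 1) * bd ^ (t + 1) = b * bd := by
    intro t; induction t with
    | zero => simp
    | succ t ih =>
      rw [pow_succ' b, pow_succ bd, mul_assoc b, ← mul_assoc (b ^ (t + 1)), ih, hfbd]
  have hsapi : ∀ s : ℕ, n + 1 ≤ s → a ^ s * (1 - a * ad) = 0 :=
    fun s hs => pi_pow_of_ge hapi hs
  have haea : ∀ s : ℕ, a ^ (s + 1) * ad = a ^ s - a ^ s * (1 - a * ad) := by
    intro s
    rw [mul_sub, mul_one, sub_sub_cancel, pow_succ, mul_assoc]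
  have cea : (1 - a * ad) * a = a * (1 - a * ad) := by
    rw [one_sub_mul, mul_one_sub, hea]
  have ceb : (1 - a * ad) * b = b := by rw [one_sub_mul, heb, sub_zero]
  have cee : (1 - a * ad) * (a * ad) = 0 := by rw [one_sub_mul, hee, sub_self]
  have cef : (1 - a * ad) * (b * bd) = b * bd := by rw [one_sub_mul, hef, sub_zero]
  have cebd : (1 - a * ad) * bd = bd := by rw [one_sub_mul, hebd, sub_zero]
  have cebdp : ∀ i : ℕ, (1 - a * ad) * bd ^ (i + 1) = bd ^ (i + 1) := fun i => by
    rw [pow_succ', ← mul_assoc, cebd]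
  set W1 := (1 - b * bd) * ad with hW1
  set W2 := ∑ i ∈ range (n + 1), bd ^ (i + 1) * a ^ i * (1 - a * ad) with hW2
  have haW1 : a * W1 = a * ad := by
    rw [hW1, ← mul_assoc, mul_one_sub, haf, sub_zero]
  have hbW1 : b * W1 = 0 := by
    rw [hW1, ← mul_assoc, mul_one_sub, hbf, sub_self, zero_mul]
  have haW2 : a * W2 = 0 := by
    rw [hW2, Finset.mul_sum]
    apply Finset.sum_eq_zero; intro i _
    rw [← mul_assoc, ← mul_assoc, habdp i, zero_mul, zero_mul]
  have hbW2 : b * W2 = (b * bd) * (1 - a * ad)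
      + ∑ i ∈ range n, bd ^ (i + 1) * a ^ (i + 1) * (1 - a * ad) := by
    rw [hW2, Finset.mul_sum, Finset.sum_range_succ', add_comm]
    congr 1
    · rw [pow_one, pow_zero, mul_one, ← mul_assoc]
    · apply Finset.sum_congr rfl; intro i _
      rw [← mul_assoc, ← mul_assoc, hbbdp (i + 1), hfbdp i]
  have com1 : (a + b) * (W1 + W2) = a * ad + ((b * bd) * (1 - a * ad)
      + ∑ i ∈ range n, bd ^ (i + 1) * a ^ (i + 1) * (1 - a * ad)) := by
    rw [add_mul, mul_add, mul_add, haW1, hbW1, haW2, hbW2, add_zero, zero_add]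
  have hW1ab : W1 * (a + b) = (1 - b * bd) * (a * ad) := by
    have e1 : (1 - b * bd) * ad * a = (1 - b * bd) * (a * ad) := by
      rw [mul_assoc, ← hac]
    have e2 : (1 - b * bd) * ad * b = 0 := by rw [mul_assoc, hadb, mul_zero]
    rw [hW1, mul_add, e1, e2, add_zero]
  have hW2ab : W2 * (a + b) = (b * bd)
      + ∑ i ∈ range n, bd ^ (i + 1) * a ^ (i + 1) * (1 - a * ad) := by
    rw [mul_add, hW2, Finset.sum_mul, Finset.sum_mul]
    have s1 : ∑ i ∈ range (n + 1), bd ^ (i + 1) * a ^ i * (1 - a * ad) * a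
        = ∑ i ∈ range n, bd ^ (i + 1) * a ^ (i + 1) * (1 - a * ad) := by
      have hterm : ∀ i : ℕ, bd ^ (i + 1) * a ^ i * (1 - a * ad) * a
          = bd ^ (i + 1) * a ^ (i + 1) * (1 - a * ad) := by
        intro i
        rw [mul_assoc, cea, ← mul_assoc, mul_assoc (bd ^ (i + 1)) (a ^ i) a, ← pow_succ]
      rw [Finset.sum_congr rfl (fun i _ => hterm i), Finset.sum_range_succ,
        mul_assoc, hsapi (n + 1) le_rfl, mul_zero, add_zero]
    have s2 : ∑ i ∈ range (n + 1), bd ^ (i + 1) * a ^ i * (1 - a * ad) * b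
        = b * bd := by
      rw [Finset.sum_eq_single_of_mem 0 (mem_range.2 (Nat.succ_pos n))]
      · rw [pow_one, pow_zero, mul_one, mul_assoc, ceb, ← hbc]
      · intro i _ hne
        obtain ⟨j, rfl⟩ := Nat.exists_eq_succ_of_ne_zero hne
        rw [mul_assoc, ceb, mul_assoc, hapb j, mul_zero]
    rw [s1, s2, add_comm]
  have ax1 : (a + b) * (W1 + W2) = (W1 + W2) * (a + b) := by
    rw [com1, add_mul, hW1ab, hW2ab]
    noncomm_ring
  have hW1e : W1 * (a * ad) = W1 := by rw [hW1, mul_assoc, hade]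
  have hW2e : W2 * (a * ad) = 0 := by
    rw [hW2, Finset.sum_mul]
    apply Finset.sum_eq_zero; intro i _
    rw [mul_assoc, cee, mul_zero]
  have c3 : (1 - a * ad) * ((b * bd) * (1 - a * ad)) = (b * bd) * (1 - a * ad) := by
    rw [← mul_assoc, cef]
  have hW1f : W1 * ((b * bd) * (1 - a * ad)) = 0 := by
    rw [hW1, mul_assoc, ← mul_assoc ad, hadf, zero_mul, mul_zero]
  have hW2f : W2 * ((b * bd) * (1 - a * ad)) = bd * (1 - a * ad) := by
    rw [hW2, Finset.sum_mul]
    rw [Finset.sum_eq_single_of_mem 0 (mem_range.2 (Nat.succ_pos n))]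
    · rw [pow_one, pow_zero, mul_one, mul_assoc, c3, ← mul_assoc, hbdf]
    · intro i _ hne
      obtain ⟨j, rfl⟩ := Nat.exists_eq_succ_of_ne_zero hne
      rw [mul_assoc, c3, ← mul_assoc, mul_assoc (bd ^ (j + 1 + 1)), hapf j,
        mul_zero, zero_mul]
  have ce3 : ∀ j : ℕ, (1 - a * ad) * (bd ^ (j + 1) * a ^ (j + 1) * (1 - a * ad))
      = bd ^ (j + 1) * a ^ (j + 1) * (1 - a * ad) := by
    intro j
    rw [← mul_assoc, ← mul_assoc, cebdp j]
  have hWJ : ∀ j : ℕ, (W1 + W2) * (bd ^ (j + 1) * a ^ (j + 1) * (1 - a * ad))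
      = bd ^ (j + 1 + 1) * a ^ (j + 1) * (1 - a * ad) := by
    intro j
    rw [add_mul]
    have p1 : W1 * (bd ^ (j + 1) * a ^ (j + 1) * (1 - a * ad)) = 0 := by
      rw [hW1, mul_assoc, ← mul_assoc ad, ← mul_assoc ad, hadbdp j,
        zero_mul, zero_mul, mul_zero]
    have p2 : W2 * (bd ^ (j + 1) * a ^ (j + 1) * (1 - a * ad))
        = bd ^ (j + 1 + 1) * a ^ (j + 1) * (1 - a * ad) := by
      rw [hW2, Finset.sum_mul]
      rw [Finset.sum_eq_single_of_mem 0 (mem_range.2 (Nat.succ_pos n))]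
      · rw [pow_one, pow_zero, mul_one, mul_assoc, ce3 j,
          ← mul_assoc, ← mul_assoc, ← pow_succ']
      · intro i _ hne
        obtain ⟨t, rfl⟩ := Nat.exists_eq_succ_of_ne_zero hne
        rw [mul_assoc, ce3 j, ← mul_assoc,
          mul_assoc (bd ^ (t + 1 + 1)), ← mul_assoc (a ^ (t + 1)),
          pow_mul_pow_eq_zero habd t j, zero_mul, mul_zero, zero_mul]
    rw [p1, p2, zero_add]
  have ax2 : (W1 + W2) * (a + b) * (W1 + W2) = W1 + W2 := by
    rw [mul_assoc, com1, mul_add, mul_add]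
    have p1 : (W1 + W2) * (a * ad) = W1 := by rw [add_mul, hW1e, hW2e, add_zero]
    have p2 : (W1 + W2) * ((b * bd) * (1 - a * ad)) = bd * (1 - a * ad) := by
      rw [add_mul, hW1f, hW2f, zero_add]
    have p3 : (W1 + W2) * (∑ i ∈ range n, bd ^ (i + 1) * a ^ (i + 1) * (1 - a * ad))
        = ∑ i ∈ range n, bd ^ (i + 1 + 1) * a ^ (i + 1) * (1 - a * ad) := by
      rw [Finset.mul_sum]
      exact Finset.sum_congr rfl (fun j _ => hWJ j)
    rw [p1, p2, p3]
    congr 1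
    conv_rhs => rw [hW2, Finset.sum_range_succ']
    rw [add_comm]
    congr 1
    simp
  have hgen : ∀ i s : ℕ, (b ^ i * a ^ (s + 1)) * (W1 + W2)
      = b ^ i * a ^ s - b ^ i * (a ^ s * (1 - a * ad)) := by
    intro i s
    have q1 : a ^ (s + 1) * W1 = a ^ s - a ^ s * (1 - a * ad) := by
      rw [hW1, ← mul_assoc, mul_one_sub, hapf s, sub_zero, haea s]
    have q2 : a ^ (s + 1) * W2 = 0 := by
      rw [hW2, Finset.mul_sum]
      apply Finset.sum_eq_zero; intro t _
      rw [← mul_assoc, ← mul_assoc, pow_mul_pow_eq_zero habd s t, zero_mul, zero_mul]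
    rw [mul_assoc, mul_add, q1, q2, add_zero, mul_sub]
  have hlastW1 : (b ^ (n + 1 + 1) * a ^ 0) * W1 = 0 := by
    rw [pow_zero, mul_one, hW1, ← mul_assoc, mul_one_sub, hbpf (n + 1),
      sub_self, zero_mul]
  have hlastW2 : (b ^ (n + 1 + 1) * a ^ 0) * W2
      = ∑ t ∈ range (n + 1), b ^ (n + 1 - t) * a ^ t * (1 - a * ad) := by
    rw [pow_zero, mul_one, hW2, Finset.mul_sum]
    apply Finset.sum_congr rfl; intro t ht
    rw [mem_range] at ht
    have h1 : n + 1 - t = (n - t) + 1 := by omega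
    have hsplit : b ^ (n + 1 + 1) = b ^ ((n - t) + 1) * b ^ (t + 1) := by
      rw [← pow_add]; congr 1; omega
    rw [h1, hsplit, mul_assoc (b ^ ((n - t) + 1)), ← mul_assoc (b ^ (t + 1)),
      ← mul_assoc (b ^ (t + 1)), hbkbdk t, ← mul_assoc, ← mul_assoc, hbpf (n - t)]
  have ax3 : (a + b) ^ (n + 1 + 1) * (W1 + W2) = (a + b) ^ (n + 1) := by
    rw [geom_pow hab, geom_pow hab, Finset.sum_mul, Finset.sum_range_succ,
      Nat.sub_self, mul_add, hlastW1, hlastW2, zero_add]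
    have hmain : ∑ i ∈ range (n + 1 + 1), (b ^ i * a ^ (n + 1 + 1 - i)) * (W1 + W2)
        = ∑ i ∈ range (n + 1 + 1),
            (b ^ i * a ^ (n + 1 - i) - b ^ i * (a ^ (n + 1 - i) * (1 - a * ad))) := by
      apply Finset.sum_congr rfl; intro i hi
      rw [mem_range] at hi
      have h2 : n + 1 + 1 - i = (n + 1 - i) + 1 := by omega
      rw [h2]; exact hgen i (n + 1 - i)
    rw [hmain, Finset.sum_sub_distrib]
    have hD : ∑ i ∈ range (n + 1 + 1), b ^ i * (a ^ (n + 1 - i) * (1 - a * ad))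
        = ∑ t ∈ range (n + 1), b ^ (n + 1 - t) * a ^ t * (1 - a * ad) := by
      rw [Finset.sum_range_succ', pow_zero, one_mul, Nat.sub_zero,
        hsapi (n + 1) le_rfl, add_zero]
      conv_rhs => rw [← Finset.sum_range_reflect]
      apply Finset.sum_congr rfl; intro j hj
      rw [mem_range] at hj
      have e1 : n + 1 - (j + 1) = n - j := by omega
      have e3 : n + 1 - 1 - j = n - j := by omega
      have e2 : n + 1 - (n - j) = j + 1 := by omega
      rw [e1, e3, e2, mul_assoc]
    rw [hD]
    exact sub_add_cancel _ _
  exact ⟨ax1, ax2, ⟨n + 1, ax3⟩⟩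

lemma DI.op_di {a x : R} (h : DI a x) : DI (op a) (op x) := by
  obtain ⟨k, hk⟩ := h.2.2
  refine ⟨?_, ?_, k, ?_⟩
  · rw [← op_mul, ← op_mul, h.comm]
  · have hx : x * (a * x) = x := by rw [← mul_assoc, h.mid]
    rw [← op_mul, ← op_mul, hx]
  · rw [← op_pow, ← op_mul, ← (h.commute.pow_left (k + 1)).eq, hk, op_pow]

lemma DI.of_op {a x : R} (h : DI (op a) (op x)) : DI a x := by
  obtain ⟨h1, h2, k, h3⟩ := h
  refine ⟨?_, ?_, k, ?_⟩
  · apply op_injective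
    rw [op_mul, op_mul]
    exact h1.symm
  · apply op_injective
    rw [op_mul, op_mul, ← mul_assoc]
    exact h2
  · apply op_injective
    rw [op_mul, op_pow, op_pow]
    have c : Commute (op a) (op x) := h1
    rw [← (c.pow_left (k + 1)).eq]
    exact h3

lemma di_add_nil' {a b ad : R} (n : ℕ)
    (hba : b * a = 0) (hbm : b ^ (n + 1) = 0)
    (hc : a * ad = ad * a) (hi : ad * a * ad = ad)
    (hpi : a ^ (n + 1) * (1 - a * ad) = 0) :
    DI (a + b) (∑ i ∈ range (n + 1), ad ^ (i + 1) * b ^ i) := by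
  have cpi : Commute a (1 - a * ad) :=
    (Commute.one_right a).sub_right ((Commute.refl a).mul_right hc)
  have h1 : (op a) * (op b) = 0 := by rw [← op_mul, hba, op_zero]
  have h2 : (op b) ^ (n + 1) = 0 := by rw [← op_pow, hbm, op_zero]
  have h3 : (op a) * (op ad) = (op ad) * (op a) := by
    rw [← op_mul, ← op_mul, hc]
  have h4 : (op ad) * (op a) * (op ad) = op ad := by
    rw [← op_mul, ← op_mul]
    congr 1
    rw [← mul_assoc, hi]
  have h5 : (op a) ^ (n + 1) * (1 - (op a) * (op ad)) = 0 := by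
    have hrw : (1 : Rᵐᵒᵖ) - op a * op ad = op (1 - a * ad) := by
      rw [op_sub, op_one, hc, op_mul]
    rw [hrw, ← op_pow, ← op_mul, ← (cpi.pow_left (n + 1)).eq, hpi, op_zero]
  have key := di_add_nil (R := Rᵐᵒᵖ) n h1 h2 h3 h4 h5
  have e1 : op a + op b = op (a + b) := by rw [op_add]
  have e2 : (∑ i ∈ range (n + 1), (op b) ^ i * (op ad) ^ (i + 1))
      = op (∑ i ∈ range (n + 1), ad ^ (i + 1) * b ^ i) := by
    rw [op_sum]
    apply Finset.sum_congr rfl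
    intro i _
    rw [op_mul, op_pow, op_pow]
  rw [e1, e2] at key
  exact DI.of_op key

end RingLemmas

set_option maxHeartbeats 3200000 in
theorem stmt_8 {d : ℕ} (P Q R S N Pd Qd T Td : Matrix (Fin d) (Fin d) ℂ)
    (hN : N = P + Q + R + S)
    (hPQ : P * Q = 0) (hQP : Q * P = 0)
    (hPS : P * S = 0) (hSQ : S * Q = 0) (hQR : Q * R = 0) (hRP : R * P = 0)
    (hSP : S * P = 0) (hSR : S * R = 0)
    (hRnil : IsNilpotent R) (hSnil : IsNilpotent S)
    (hPd : IsDrazinInverse P Pd) (hQd : IsDrazinInverse Q Qd)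
    (hT : T = (S + Q) + (1 - P * Pd) * (R + P))
    (hTd : IsDrazinInverse T Td)
    (SQd : Matrix (Fin d) (Fin d) ℂ) (hSQd : IsDrazinInverse (S + Q) SQd)
    (Ud : Matrix (Fin d) (Fin d) ℂ)
    (hUd : IsDrazinInverse ((1 - P * Pd) * (R + P)) Ud)
    (g l nn : ℕ) (hg : 1 ≤ g) (hl : 1 ≤ l) (hnn : 1 ≤ nn)
    -- `g ≥ ind T`
    (hgT : T ^ g * (1 - T * Td) = 0)
    -- `l ≥ max (ind S) (ind Q)` (recall `Sd = 0` as `S` is nilpotent)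
    (hlS : S ^ l = 0) (hlQ : Q ^ l * (1 - Q * Qd) = 0)
    -- `nn ≥ max (ind (S+Q)) (ind (Pπ (R+P)))`
    (hnSQ : (S + Q) ^ nn * (1 - (S + Q) * SQd) = 0)
    (hnU : ((1 - P * Pd) * (R + P)) ^ nn *
      (1 - ((1 - P * Pd) * (R + P)) * Ud) = 0) :
    Td = (1 - P * Pd) *
        ∑ j ∈ Finset.range nn, ∑ k ∈ Finset.range (j + 1),
          P ^ k * R ^ (j - k) *
            ∑ h ∈ Finset.range l, Qd ^ (h + j + 1) * S ^ h ∧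
    IsDrazinInverse N
      (Pd +
        ((∑ k ∈ Finset.range g, Pd ^ (k + 2) * R * T ^ k * (1 - T * Td))
          - Pd * ∑ j ∈ Finset.range nn,
              R ^ (j + 1) * ∑ h ∈ Finset.range l, Qd ^ (h + j + 1) * S ^ h)
        + Td) := by
  obtain ⟨l0, rfl⟩ := Nat.exists_eq_add_of_le' hl
  obtain ⟨n0, rfl⟩ := Nat.exists_eq_add_of_le' hnn
  obtain ⟨g0, rfl⟩ := Nat.exists_eq_add_of_le' hg
  obtain ⟨hPc, hPm, kP, hkP⟩ := hPd
  obtain ⟨hQc, hQm, kQ, hkQ⟩ := hQd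
  obtain ⟨hTc, hTm, kT, hkT⟩ := hTd
  obtain ⟨kR, hkR⟩ := hRnil
  -- basic collapse identities
  have hPdsq : Pd = Pd * Pd * P := by rw [mul_assoc, ← hPc, ← mul_assoc, hPm]
  have hPdsq' : Pd = P * (Pd * Pd) := by rw [← mul_assoc, hPc, hPm]
  have hQdsq' : Qd = Q * (Qd * Qd) := by rw [← mul_assoc, hQc, hQm]
  have hPdQ : Pd * Q = 0 := by
    conv_lhs => rw [hPdsq]
    rw [mul_assoc (Pd * Pd), hPQ, mul_zero]
  have hPdS : Pd * S = 0 := by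
    conv_lhs => rw [hPdsq]
    rw [mul_assoc (Pd * Pd), hPS, mul_zero]
  have hPQd : P * Qd = 0 := by
    conv_lhs => rw [hQdsq']
    rw [← mul_assoc, hPQ, zero_mul]
  have hPdQd : Pd * Qd = 0 := by
    conv_lhs => rw [hQdsq']
    rw [← mul_assoc, hPdQ, zero_mul]
  have hSQd2 : S * Qd = 0 := by
    conv_lhs => rw [hQdsq']
    rw [← mul_assoc, hSQ, zero_mul]
  have hRPd : R * Pd = 0 := by
    conv_lhs => rw [hPdsq']
    rw [← mul_assoc, hRP, zero_mul]
  have hee : (P * Pd) * (P * Pd) = P * Pd := by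
    rw [mul_assoc, ← mul_assoc Pd, hPm]
  have hePd : (P * Pd) * Pd = Pd := by rw [mul_assoc, ← hPdsq']
  have hPde : Pd * (P * Pd) = Pd := by rw [← mul_assoc, hPm]
  have hRe : R * (P * Pd) = 0 := by rw [← mul_assoc, hRP, zero_mul]
  have hPeP : (P * Pd) * P = P * (Pd * P) := by rw [mul_assoc]
  have hPeP' : (P * Pd) * P = P * (P * Pd) := by rw [mul_assoc, ← hPc]
  have cPPd : Commute P (P * Pd) := (Commute.refl P).mul_right hPc
  have cPpi : Commute P (1 - P * Pd) := (Commute.one_right P).sub_right cPPd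
  have hPiidem : (1 - P * Pd) * (1 - P * Pd) = 1 - P * Pd := by
    rw [sub_mul, one_mul, mul_one_sub, hee, sub_self, sub_zero]
  have hRPi : R * (1 - P * Pd) = R := by
    rw [mul_one_sub, hRe, sub_zero]
  have hPdPi : Pd * (1 - P * Pd) = 0 := by
    rw [mul_one_sub, hPde, sub_self]
  have hPiPd : (1 - P * Pd) * Pd = 0 := by
    rw [one_sub_mul, hePd, sub_self]
  have hepi : (P * Pd) * (1 - P * Pd) = 0 := by
    rw [mul_one_sub, hee, sub_self]
  have hpie : (1 - P * Pd) * (P * Pd) = 0 := by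
    rw [one_sub_mul, hee, sub_self]
  have hRPp : ∀ t : ℕ, R * P ^ (t + 1) = 0 := fun t => by
    rw [pow_succ', ← mul_assoc, hRP, zero_mul]
  have hSQdp : ∀ h : ℕ, S * Qd ^ (h + 1) = 0 := fun h => by
    rw [pow_succ', ← mul_assoc, hSQd2, zero_mul]
  have hPdQdp : ∀ h : ℕ, Pd * Qd ^ (h + 1) = 0 := fun h => by
    rw [pow_succ', ← mul_assoc, hPdQd, zero_mul]
  have hRs : ∀ s : ℕ, kR ≤ s → R ^ s = 0 := by
    intro s hs
    obtain ⟨t, rfl⟩ := Nat.exists_eq_add_of_le hs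
    rw [pow_add, hkR, zero_mul]
  have hPpi0 : P ^ kP * (1 - P * Pd) = 0 := by
    rw [mul_one_sub, ← mul_assoc, ← pow_succ, hkP, sub_self]
  have hPpis : ∀ s : ℕ, kP ≤ s → P ^ s * (1 - P * Pd) = 0 :=
    fun s hs => pi_pow_of_ge hPpi0 hs
  -- Ad, the Drazin inverse of S+Q
  set Ad := ∑ h ∈ Finset.range (l0 + 1), Qd ^ (h + 1) * S ^ h with hAd
  have dSQ' : DI (Q + S) Ad := di_add_nil' l0 hSQ hlS hQc hQm hlQ
  have dSQ2 : DI (S + Q) Ad := by rwa [add_comm Q S] at dSQ'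
  have hSQdAd : SQd = Ad := DI.unique hSQd dSQ2
  have hSAd : S * Ad = 0 := by
    rw [hAd, Finset.mul_sum]
    apply Finset.sum_eq_zero; intro h _
    rw [← mul_assoc, hSQdp h, zero_mul]
  have hPdAd : Pd * Ad = 0 := by
    rw [hAd, Finset.mul_sum]
    apply Finset.sum_eq_zero; intro h _
    rw [← mul_assoc, hPdQdp h, zero_mul]
  have hPiAd : (1 - P * Pd) * Ad = Ad := by
    rw [one_sub_mul, mul_assoc, hPdAd, mul_zero, sub_zero]
  have hAdAd : Ad * Ad = Qd * Ad := by
    conv_lhs => rw [hAd]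
    rw [Finset.sum_mul,
      Finset.sum_eq_single_of_mem 0 (Finset.mem_range.2 (Nat.succ_pos l0))]
    · rw [pow_zero, pow_one, mul_one]
    · intro h _ hne
      obtain ⟨t, rfl⟩ := Nat.exists_eq_succ_of_ne_zero hne
      have hz : S ^ (t + 1) * Ad = 0 := by rw [pow_succ, mul_assoc, hSAd, mul_zero]
      rw [mul_assoc, hz, mul_zero]
  have hAdpow : ∀ j : ℕ, Ad ^ (j + 1) = Qd ^ j * Ad := by
    intro j; induction j with
    | zero => simp
    | succ j ih => rw [pow_succ, ih, mul_assoc, hAdAd, ← mul_assoc, ← pow_succ]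
  have hQdAdj : ∀ j : ℕ, Qd ^ j * Ad
      = ∑ h ∈ Finset.range (l0 + 1), Qd ^ (h + j + 1) * S ^ h := by
    intro j
    rw [hAd, Finset.mul_sum]
    apply Finset.sum_congr rfl; intro h _
    rw [← mul_assoc, ← pow_add, show j + (h + 1) = h + j + 1 by omega]
  -- powers of B = (1 - P*Pd)*(R+P)
  have hBpow : ∀ j : ℕ, ((1 - P * Pd) * (R + P)) ^ (j + 1)
      = (1 - P * Pd) * ∑ k ∈ Finset.range (j + 1 + 1), P ^ k * R ^ (j + 1 - k) := by
    intro j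
    induction j with
    | zero =>
      rw [pow_one]
      congr 1
      rw [Finset.sum_range_succ, Finset.sum_range_one]
      simp
    | succ j ih =>
      rw [pow_succ', ih, ← mul_assoc]
      have hBPi : ((1 - P * Pd) * (R + P)) * (1 - P * Pd)
          = (1 - P * Pd) * R + P * (1 - P * Pd) := by
        rw [mul_assoc, add_mul, hRPi, mul_add]
        congr 1
        rw [← mul_assoc, ← cPpi.eq, mul_assoc, hPiidem]
      rw [hBPi, add_mul]
      have hs1 : ((1 - P * Pd) * R) * (∑ k ∈ Finset.range (j + 1 + 1), P ^ k * R ^ (j + 1 - k))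
          = (1 - P * Pd) * R ^ (j + 1 + 1) := by
        rw [mul_assoc, Finset.mul_sum]
        congr 1
        rw [Finset.sum_eq_single_of_mem 0 (Finset.mem_range.2 (Nat.succ_pos _))]
        · simp only [pow_zero, one_mul, Nat.sub_zero]
          rw [← pow_succ']
        · intro k _ hne
          obtain ⟨t, rfl⟩ := Nat.exists_eq_succ_of_ne_zero hne
          rw [← mul_assoc, hRPp t, zero_mul]
      have hs2 : (P * (1 - P * Pd)) * (∑ k ∈ Finset.range (j + 1 + 1), P ^ k * R ^ (j + 1 - k))
          = (1 - P * Pd) * ∑ k ∈ Finset.range (j + 1 + 1), P ^ (k + 1) * R ^ (j + 1 - k) := by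
        rw [cPpi.eq, mul_assoc, Finset.mul_sum]
        congr 1
        apply Finset.sum_congr rfl; intro k _
        rw [← mul_assoc, ← pow_succ']
      rw [hs1, hs2, ← mul_add]
      congr 1
      conv_rhs => rw [Finset.sum_range_succ']
      rw [pow_zero, one_mul, Nat.sub_zero, add_comm]
      congr 1
      apply Finset.sum_congr rfl; intro k _
      have e : j + 1 + 1 - (k + 1) = j + 1 - k := by omega
      rw [e]
  -- B is nilpotent, hence Ud = 0 and B^(n0+1) = 0
  have hBnilm : ((1 - P * Pd) * (R + P)) ^ (kP + kR + 1) = 0 := by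
    rw [hBpow (kP + kR), Finset.mul_sum]
    apply Finset.sum_eq_zero; intro k hk
    rw [Finset.mem_range] at hk
    by_cases hkp : kP ≤ k
    · rw [← mul_assoc, ← (cPpi.pow_left k).eq, hPpis k hkp, zero_mul]
    · rw [hRs (kP + kR + 1 - k) (by omega), mul_zero, mul_zero]
  have dB0 : DI ((1 - P * Pd) * (R + P)) (0 : Matrix (Fin d) (Fin d) ℂ) := by
    refine ⟨by rw [mul_zero, zero_mul], by rw [zero_mul, zero_mul], kP + kR + 1, ?_⟩
    rw [mul_zero, hBnilm]
  have hUd0 : Ud = 0 := DI.unique hUd dB0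
  have hBnn : ((1 - P * Pd) * (R + P)) ^ (n0 + 1) = 0 := by
    have h' := hnU
    rw [hUd0, mul_zero, sub_zero, mul_one] at h'
    exact h'
  -- the Drazin inverse of T
  have hSQP : (S + Q) * P = 0 := by rw [add_mul, hSP, hQP, add_zero]
  have hSQRP : (S + Q) * (R + P) = 0 := by
    rw [mul_add, add_mul, add_mul, hSR, hSP, hQR, hQP]
    simp
  have hab : (S + Q) * ((1 - P * Pd) * (R + P)) = 0 := by
    rw [← mul_assoc, mul_one_sub, ← mul_assoc, hSQP, zero_mul, sub_zero, hSQRP]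
  have hnSQ' : (S + Q) ^ (n0 + 1) * (1 - (S + Q) * Ad) = 0 := by
    rw [← hSQdAd]; exact hnSQ
  have dT' : DI ((S + Q) + (1 - P * Pd) * (R + P))
      (∑ i ∈ Finset.range (n0 + 1), ((1 - P * Pd) * (R + P)) ^ i * Ad ^ (i + 1)) :=
    di_add_nil n0 hab hBnn dSQ2.comm dSQ2.mid hnSQ'
  have dT2 : DI T (∑ i ∈ Finset.range (n0 + 1), ((1 - P * Pd) * (R + P)) ^ i * Ad ^ (i + 1)) := by
    rw [hT]; exact dT'
  have hTformula : Td
      = ∑ i ∈ Finset.range (n0 + 1), ((1 - P * Pd) * (R + P)) ^ i * Ad ^ (i + 1) :=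
    DI.unique ⟨hTc, hTm, kT, hkT⟩ dT2
  -- Part 1
  have goal1 : Td = (1 - P * Pd) *
      ∑ j ∈ Finset.range (n0 + 1), ∑ k ∈ Finset.range (j + 1),
        P ^ k * R ^ (j - k) *
          ∑ h ∈ Finset.range (l0 + 1), Qd ^ (h + j + 1) * S ^ h := by
    rw [hTformula, Finset.mul_sum]
    apply Finset.sum_congr rfl
    intro j _
    rw [hAdpow j, ← hQdAdj j]
    cases j with
    | zero =>
      simp only [pow_zero, one_mul, Finset.sum_range_one, Nat.sub_zero, zero_add]
      rw [hPiAd]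
    | succ j' =>
      rw [hBpow j', mul_assoc, Finset.sum_mul]
  refine ⟨goal1, ?_⟩
  -- Part 2 : set up V and Vd
  have c1 : (P * Pd * (R + P)) * (Pd + Pd * Pd * R) = P * Pd + Pd * R := by
    have A1 : (P * Pd * (R + P)) * Pd = P * Pd := by
      rw [mul_assoc, add_mul, hRPd, zero_add, hee]
    have A2 : (P * Pd * (R + P)) * (Pd * Pd * R) = Pd * R := by
      rw [mul_assoc Pd Pd R, ← mul_assoc, A1, ← mul_assoc, hePd]
    rw [mul_add, A1, A2]
  have c2 : (Pd + Pd * Pd * R) * (P * Pd * (R + P)) = P * Pd + Pd * R := by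
    have B1 : Pd * (P * Pd * (R + P)) = Pd * R + Pd * P := by
      rw [← mul_assoc, hPde, mul_add]
    have B2 : (Pd * Pd * R) * (P * Pd * (R + P)) = 0 := by
      rw [mul_assoc (Pd * Pd), ← mul_assoc R, hRe, zero_mul, mul_zero]
    rw [add_mul, B1, B2, add_zero, ← hPc, add_comm]
  have c3 : (Pd + Pd * Pd * R) * (P * Pd * (R + P)) * (Pd + Pd * Pd * R)
      = Pd + Pd * Pd * R := by
    rw [c2, add_mul, mul_add, mul_add]
    have x1 : (P * Pd) * Pd = Pd := hePd
    have x2 : (P * Pd) * (Pd * Pd * R) = Pd * Pd * R := by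
      rw [mul_assoc Pd Pd R, ← mul_assoc, hePd, ← mul_assoc]
    have x3 : (Pd * R) * Pd = 0 := by rw [mul_assoc, hRPd, mul_zero]
    have x4 : (Pd * R) * (Pd * Pd * R) = 0 := by
      rw [mul_assoc, ← mul_assoc R, ← mul_assoc R, hRPd, zero_mul, zero_mul, mul_zero]
    rw [x1, x2, x3, x4, zero_add, add_zero]
  have c4' : (P * Pd * (R + P)) * ((P * Pd * (R + P)) * (Pd + Pd * Pd * R))
      = P * Pd * (R + P) := by
    rw [c1, mul_add]
    have y1 : (P * Pd * (R + P)) * (P * Pd) = (P * Pd) * P := by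
      rw [mul_assoc, add_mul, hRe, zero_add, ← hPeP', ← mul_assoc, hee]
    have y2 : (P * Pd * (R + P)) * (Pd * R) = (P * Pd) * R := by
      rw [mul_assoc, add_mul, ← mul_assoc R, hRPd, zero_mul, zero_add,
        ← mul_assoc P Pd R, ← mul_assoc, hee]
    rw [y1, y2, mul_add, add_comm]
  have hVpi : (P * Pd * (R + P)) *
      (1 - (P * Pd * (R + P)) * (Pd + Pd * Pd * R)) = 0 := by
    rw [mul_one_sub, c4', sub_self]
  have hTV : T * (P * Pd * (R + P)) = 0 := by
    rw [hT, add_mul]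
    have t1 : (S + Q) * (P * Pd * (R + P)) = 0 := by
      rw [← mul_assoc, ← mul_assoc, hSQP, zero_mul, zero_mul]
    have t2 : ((1 - P * Pd) * (R + P)) * (P * Pd * (R + P)) = 0 := by
      rw [mul_assoc (1 - P * Pd), ← mul_assoc (R + P), add_mul, hRe, zero_add,
        ← hPeP', mul_assoc (P * Pd), ← mul_assoc, hpie, zero_mul]
    rw [t1, t2, add_zero]
  have hPdT : Pd * T = 0 := by
    rw [hT, mul_add, mul_add, hPdS, hPdQ, add_zero, ← mul_assoc, hPdPi, zero_mul,
      add_zero]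
  have hVdpow : ∀ i : ℕ, (Pd + Pd * Pd * R) ^ (i + 1)
      = Pd ^ (i + 1) + Pd ^ (i + 2) * R := by
    intro i; induction i with
    | zero => simp [pow_succ]
    | succ i ih =>
      rw [pow_succ, ih, add_mul, mul_add, mul_add]
      have z1 : Pd ^ (i + 1) * Pd = Pd ^ (i + 1 + 1) := by rw [← pow_succ]
      have z2 : Pd ^ (i + 1) * (Pd * Pd * R) = Pd ^ (i + 1 + 2) * R := by
        rw [← mul_assoc, ← mul_assoc, ← pow_succ, ← pow_succ]
      have z3 : (Pd ^ (i + 2) * R) * Pd = 0 := by rw [mul_assoc, hRPd, mul_zero]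
      have z4 : (Pd ^ (i + 2) * R) * (Pd * Pd * R) = 0 := by
        rw [mul_assoc, ← mul_assoc R, ← mul_assoc R, hRPd, zero_mul, zero_mul,
          mul_zero]
      rw [z1, z2, z3, z4, add_zero, add_zero]
  -- the two pieces of the sum in the Drazin inverse of N
  have hsum2 : ∑ i ∈ Finset.range (g0 + 1),
        (Pd + Pd * Pd * R) ^ (i + 1) * T ^ i * (1 - T * Td)
      = Pd + ∑ k ∈ Finset.range (g0 + 1), Pd ^ (k + 2) * R * T ^ k * (1 - T * Td) := by
    have hsplit : ∀ i ∈ Finset.range (g0 + 1),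
        (Pd + Pd * Pd * R) ^ (i + 1) * T ^ i * (1 - T * Td)
        = Pd ^ (i + 1) * T ^ i * (1 - T * Td)
          + Pd ^ (i + 2) * R * T ^ i * (1 - T * Td) := by
      intro i _
      rw [hVdpow i, add_mul, add_mul]
    rw [Finset.sum_congr rfl hsplit, Finset.sum_add_distrib]
    congr 1
    rw [Finset.sum_eq_single_of_mem 0 (Finset.mem_range.2 (Nat.succ_pos g0))]
    · rw [pow_one, pow_zero, mul_one, mul_one_sub, ← mul_assoc, hPdT, zero_mul,
        sub_zero]
    · intro i _ hne
      obtain ⟨t, rfl⟩ := Nat.exists_eq_succ_of_ne_zero hne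
      rw [pow_mul_pow_eq_zero hPdT (t + 1) t, zero_mul]
  have hRTd : R * Td = ∑ j ∈ Finset.range (n0 + 1),
      R ^ (j + 1) * ∑ h ∈ Finset.range (l0 + 1), Qd ^ (h + j + 1) * S ^ h := by
    rw [goal1, ← mul_assoc, hRPi, Finset.mul_sum]
    apply Finset.sum_congr rfl
    intro j _
    rw [Finset.mul_sum,
      Finset.sum_eq_single_of_mem 0 (Finset.mem_range.2 (Nat.succ_pos j))]
    · simp only [pow_zero, one_mul, Nat.sub_zero]
      rw [← mul_assoc, ← pow_succ']
    · intro k _ hne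
      obtain ⟨t, rfl⟩ := Nat.exists_eq_succ_of_ne_zero hne
      rw [← mul_assoc, ← mul_assoc, hRPp t, zero_mul, zero_mul]
  have hPPdTd : (P * Pd) * Td = 0 := by
    rw [goal1, ← mul_assoc, hepi, zero_mul]
  have hpart2 : (1 - (P * Pd * (R + P)) * (Pd + Pd * Pd * R)) * Td
      = Td - Pd * ∑ j ∈ Finset.range (n0 + 1),
          R ^ (j + 1) * ∑ h ∈ Finset.range (l0 + 1), Qd ^ (h + j + 1) * S ^ h := by
    rw [c1, one_sub_mul, add_mul, hPPdTd, zero_add, mul_assoc, hRTd]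
  have hNTV : N = T + P * Pd * (R + P) := by
    rw [hN, hT]
    noncomm_ring
  have key2 := di_add_grp g0 hTV hTc hTm hgT (c1.trans c2.symm) c3 hVpi
  have hfinal : (1 - (P * Pd * (R + P)) * (Pd + Pd * Pd * R)) * Td
      + ∑ i ∈ Finset.range (g0 + 1),
          (Pd + Pd * Pd * R) ^ (i + 1) * T ^ i * (1 - T * Td)
      = Pd + ((∑ k ∈ Finset.range (g0 + 1), Pd ^ (k + 2) * R * T ^ k * (1 - T * Td))
          - Pd * ∑ j ∈ Finset.range (n0 + 1),
              R ^ (j + 1) * ∑ h ∈ Finset.range (l0 + 1), Qd ^ (h + j + 1) * S ^ h)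
        + Td := by
    rw [hpart2, hsum2]
    abel
  rw [hfinal] at key2
  rw [← hNTV] at key2
  exact key2
end

section
/- Assume BZ = 0, ZC = 0, C·A^π·A = 0, and C·A^π·B = 0. Let W = A·A^d + A^d·B·C·A^d and let Q = [[A^2·A^d, A·A^d·B], [C·A·A^d, C·A^d·B]], whose Drazin inverse is Q^d = [I; C·A^d]·((A·W)^d)^2·A·[I, A^d·B]. Then for n' such that ind(A) = n'−1 (i.e., A^π·A^{n'−1} = 0 with n'−1 minimal), the Drazin inverse of M is M^d = [[0, 0], [0, Z^d]] + Q^d + (Q^d)^2·[[0, 0], [C·A^π, 0]] + Σ_{j=1}^{n'−1} [[0, A^{j−1}·A^π·B], [0, 0]]·( (Q^d)^{j+1} + (Q^d)^{j+2}·[[0, 0], [C·A^π, 0]] ). -/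
open Matrix Finset

/-!
Write `Aπ = 1 - A A^d` and split `M = (Q + K + L) + diag(0, Z)` with `K = [[0, 0], [C Aπ, 0]]`
and `L = [[Aπ A, Aπ B], [0, 0]]`. Since `Q = [I; C A^d] · A² A^d · [I, A^d B]` and the reversed
product is `A W`, Cline's formula `(r t)^d = r ((t r)^d)^2 t` gives `Q^d`. The hypotheses give
`K Q = 0`, `K² = 0`, `(Q + K) L = 0` and `L^(ind A + 1) = 0`, so two applications of the
nilpotent-perturbation formulas for `(x + y)^d` (with `x y = 0` or `y x = 0` and `y` nilpotent)
yield the Drazin inverse of `Q + K + L = [[A, B], [C, C A^d B]]`. Because `B Z = 0 = Z C`, that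
matrix and `diag(0, Z)` annihilate each other, so their Drazin inverses add. Finally
`Aπ (A W)^d = 0`, so in the products `L^j Q^d` only the block `A^(j-1) Aπ B` of `L^j` survives.
-/

def IsDrazinInv {R : Type*} [Monoid R] (a x : R) : Prop :=
  a * x = x * a ∧ x * a * x = x ∧ ∃ k : ℕ, a ^ (k + 1) * x = a ^ k

theorem isDrazinInverse_iff_isDrazinInv {ι : Type*} [Fintype ι] [DecidableEq ι]
    {A X : Matrix ι ι ℂ} : IsDrazinInverse A X ↔ IsDrazinInv A X :=
  Iff.rfl

namespace IsDrazinInv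

section Monoid
variable {R : Type*} [Monoid R] {a x y : R}

theorem commute (h : IsDrazinInv a x) : Commute a x := h.1

theorem inv_mul_inv (h : IsDrazinInv a x) : x * a * x = x := h.2.1

theorem mul_inv_inv (h : IsDrazinInv a x) : a * x * x = x := by
  rw [h.commute.eq, h.inv_mul_inv]

theorem inv_inv_mul (h : IsDrazinInv a x) : x * x * a = x := by
  rw [mul_assoc, ← h.commute.eq, ← mul_assoc, h.inv_mul_inv]

theorem isIdempotentElem_mul_inv (h : IsDrazinInv a x) : IsIdempotentElem (a * x) := by
  rw [IsIdempotentElem, mul_assoc, ← mul_assoc x, h.inv_mul_inv]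

theorem sq_mul_inv (h : IsDrazinInv a x) : a ^ 2 * x = a * x * a := by
  rw [sq, mul_assoc, mul_assoc, h.commute.eq]

theorem inv_mul_eq_inv {e : R} (h : IsDrazinInv a x) (he : a * e = a) : x * e = x := by
  rw [← h.inv_inv_mul, mul_assoc, he]

theorem exists_pow_succ_mul_inv (h : IsDrazinInv a x) :
    ∃ k, ∀ r, k ≤ r → a ^ (r + 1) * x = a ^ r := by
  obtain ⟨k, hk⟩ := h.2.2
  refine ⟨k, Nat.le_induction hk fun r _ ih => ?_⟩
  rw [pow_succ', mul_assoc, ih, ← pow_succ']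

theorem inv_pow_succ_mul_pow (h : IsDrazinInv a x) (j : ℕ) : x ^ (j + 1) * a ^ j = x := by
  induction j with
  | zero => simp
  | succ j ih =>
    calc x ^ (j + 2) * a ^ (j + 1) = x ^ j * (x * x * a) * a ^ j := by
          simp only [pow_succ, pow_succ' a, mul_assoc]
      _ = x := by rw [h.inv_inv_mul, ← pow_succ, ih]

theorem op (h : IsDrazinInv a x) : IsDrazinInv (MulOpposite.op a) (MulOpposite.op x) := by
  obtain ⟨k, hk⟩ := h.2.2
  refine ⟨by rw [← MulOpposite.op_mul, ← MulOpposite.op_mul, h.commute.eq],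
    by rw [← MulOpposite.op_mul, ← MulOpposite.op_mul, ← mul_assoc, h.inv_mul_inv], k, ?_⟩
  rw [← MulOpposite.op_pow, ← MulOpposite.op_pow, ← MulOpposite.op_mul,
    ← (h.commute.pow_left (k + 1)).eq, hk]

theorem of_op (h : IsDrazinInv (MulOpposite.op a) (MulOpposite.op x)) : IsDrazinInv a x := by
  obtain ⟨h₁, h₂, k, hk⟩ := h
  simp only [← MulOpposite.op_mul, ← MulOpposite.op_pow, MulOpposite.op_inj] at h₁ h₂ hk
  have hc : Commute a x := h₁.symm
  exact ⟨hc.eq, by rw [mul_assoc, h₂], k, by rw [(hc.pow_left (k + 1)).eq, hk]⟩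

theorem pow_mul_inv_pow_succ (h : IsDrazinInv a x) (j : ℕ) : a ^ j * x ^ (j + 1) = x :=
  MulOpposite.op_injective (by simpa [MulOpposite.op_pow] using h.op.inv_pow_succ_mul_pow j)

theorem unique (hx : IsDrazinInv a x) (hy : IsDrazinInv a y) : x = y := by
  obtain ⟨k, hk⟩ := hx.exists_pow_succ_mul_inv
  obtain ⟨l, hl⟩ := hy.exists_pow_succ_mul_inv
  set r := max k l
  calc x = x ^ (r + 1) * (a ^ (r + 1) * y) := by
        rw [hl r (le_max_right k l), hx.inv_pow_succ_mul_pow]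
    _ = x * a * y := by simp only [pow_succ a, ← mul_assoc, hx.inv_pow_succ_mul_pow]
    _ = x * a ^ (r + 1) * y ^ (r + 1) := by
        conv_lhs => rw [← hy.pow_mul_inv_pow_succ r]
        simp only [pow_succ', mul_assoc]
    _ = a ^ (r + 1) * x * y ^ (r + 1) := by rw [(hx.commute.pow_left (r + 1)).eq]
    _ = y := by rw [hk r (le_max_left k l), hy.pow_mul_inv_pow_succ]

end Monoid

section MonoidWithZero
variable {R : Type*} [MonoidWithZero R] {a x c : R}

theorem zero : IsDrazinInv (0 : R) 0 := ⟨rfl, by simp, 1, by simp⟩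

theorem mul_inv_eq_zero (h : IsDrazinInv a x) (hc : c * a = 0) : c * x = 0 := by
  rw [← h.mul_inv_inv, ← mul_assoc, ← mul_assoc, hc, zero_mul, zero_mul]

theorem inv_mul_eq_zero (h : IsDrazinInv a x) (hc : a * c = 0) : x * c = 0 := by
  rw [← h.inv_inv_mul, mul_assoc, hc, mul_zero]

end MonoidWithZero

section Ring
variable {R : Type*} [Ring R] {a x y xd yd : R}

theorem commute_one_sub (h : IsDrazinInv a x) : Commute a (1 - a * x) :=
  (Commute.one_right a).sub_right ((Commute.refl a).mul_right h.commute)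

theorem isIdempotentElem_one_sub (h : IsDrazinInv a x) : IsIdempotentElem (1 - a * x) :=
  h.isIdempotentElem_mul_inv.one_sub

theorem inv_mul_one_sub (h : IsDrazinInv a x) : x * (1 - a * x) = 0 := by
  rw [mul_sub, mul_one, ← mul_assoc, h.inv_mul_inv, sub_self]

theorem one_sub_mul_mul_inv (h : IsDrazinInv a x) : (1 - a * x) * (a * x) = 0 := by
  rw [sub_mul, one_mul, h.isIdempotentElem_mul_inv.eq, sub_self]

theorem add_of_mul_eq_zero (hx : IsDrazinInv x xd) (hy : IsDrazinInv y yd) (hxy : x * y = 0)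
    (hyx : y * x = 0) : IsDrazinInv (x + y) (xd + yd) := by
  have hxyd : x * yd = 0 := hy.mul_inv_eq_zero hxy
  have hyxd : y * xd = 0 := hx.mul_inv_eq_zero hyx
  have hxdy : xd * y = 0 := hx.inv_mul_eq_zero hxy
  have hydx : yd * x = 0 := hy.inv_mul_eq_zero hyx
  have hpow : ∀ n : ℕ, (x + y) ^ (n + 1) = x ^ (n + 1) + y ^ (n + 1) := by
    intro n
    induction n with
    | zero => simp
    | succ n ih =>
      rw [pow_succ, ih, pow_succ x (n + 1), pow_succ y (n + 1)]
      simp only [add_mul, mul_add, pow_succ, mul_assoc, hxy, hyx, mul_zero, add_zero, zero_add]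
  obtain ⟨k, hk⟩ := hx.exists_pow_succ_mul_inv
  obtain ⟨l, hl⟩ := hy.exists_pow_succ_mul_inv
  refine ⟨?_, ?_, k + l + 1, ?_⟩
  · simp only [add_mul, mul_add, hxyd, hyxd, hxdy, hydx, hx.commute.eq, hy.commute.eq]
  · have hsum : (xd + yd) * (x + y) = xd * x + yd * y := by
      simp only [add_mul, mul_add, hxdy, hydx, add_zero, zero_add]
    rw [hsum, add_mul, mul_add, mul_add, hx.inv_mul_inv, hy.inv_mul_inv, mul_assoc xd,
      hxyd, mul_assoc yd, hyxd, mul_zero, mul_zero, add_zero, zero_add]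
  · have hxN : x ^ (k + l + 1 + 1) * yd = 0 := by rw [pow_succ, mul_assoc, hxyd, mul_zero]
    have hyN : y ^ (k + l + 1 + 1) * xd = 0 := by rw [pow_succ, mul_assoc, hyxd, mul_zero]
    rw [hpow, hpow, add_mul, mul_add, mul_add, hxN, hyN, add_zero, zero_add,
      hk _ (by omega), hl _ (by omega)]

end Ring

end IsDrazinInv

section Ring
variable {R : Type*} [Ring R] {x y z : R} {p : ℕ}

theorem add_pow_eq_sum_of_mul_eq_zero (h : x * y = 0) (r : ℕ) :
    (x + y) ^ r = ∑ i ∈ range (r + 1), y ^ i * x ^ (r - i) := by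
  induction r with
  | zero => simp
  | succ r ih =>
    have hx : ∀ i, x * (y ^ (i + 1) * x ^ (r - (i + 1))) = 0 := fun i => by
      rw [pow_succ', ← mul_assoc, ← mul_assoc, h, zero_mul, zero_mul]
    rw [pow_succ', ih, add_mul, mul_sum, mul_sum, sum_range_succ' _ r, sum_range_succ' _ (r + 1)]
    simp only [hx, sum_const_zero, zero_add, pow_zero, one_mul, Nat.sub_zero, ← mul_assoc,
      ← pow_succ', Nat.add_sub_add_right]
    rw [add_comm]

theorem sum_range_pow_mul_pow_succ_eq (hy : y ^ (p + 1) = 0) :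
    ∑ j ∈ range (p + 1), y ^ j * z ^ (j + 1) =
      z + y * (∑ j ∈ range (p + 1), y ^ j * z ^ (j + 1)) * z := by
  rw [mul_sum, sum_mul, sum_range_succ', sum_range_succ _ p, ← mul_assoc, ← pow_succ', hy]
  simp only [zero_mul, add_zero, pow_zero, one_mul, zero_add, add_comm z, mul_assoc, ← pow_succ]
  simp only [← mul_assoc, ← pow_succ', pow_one]

theorem add_sq_mul_pow_succ (h : y * x = 0) (r : ℕ) :
    (x + x ^ 2 * y) ^ (r + 1) = x ^ (r + 1) + x ^ (r + 2) * y := by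
  induction r with
  | zero => simp
  | succ r ih =>
    have h₂ : y * (x ^ 2 * y) = 0 := by
      rw [← mul_assoc, sq, ← mul_assoc, h, zero_mul, zero_mul]
    rw [pow_succ, ih]
    simp only [add_mul, mul_add, mul_assoc, h, h₂, mul_zero, add_zero]
    rw [← pow_succ, ← mul_assoc, ← pow_add]

end Ring

namespace IsDrazinInv
variable {R : Type*} [Ring R] {x y xd : R} {p : ℕ}

theorem add_of_mul_eq_zero_of_pow_eq_zero (hx : IsDrazinInv x xd) (hxy : x * y = 0)
    (hy : y ^ (p + 1) = 0) :
    IsDrazinInv (x + y) (∑ j ∈ range (p + 1), y ^ j * xd ^ (j + 1)) := by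
  set w := ∑ j ∈ range (p + 1), y ^ j * xd ^ (j + 1)
  have hw : w = xd + y * w * xd := sum_range_pow_mul_pow_succ_eq hy
  have hxdy : xd * y = 0 := hx.inv_mul_eq_zero hxy
  have hwxdx : w * (xd * x) = w := by
    nth_rewrite 1 [hw]
    simp only [add_mul, mul_assoc]
    rw [← mul_assoc xd xd x, hx.inv_inv_mul, ← mul_assoc, ← hw]
  have hxw : x * w = x * xd := by
    rw [hw]
    simp only [mul_add, ← mul_assoc, hxy, zero_mul, add_zero]
  have hwy : w * y = 0 := by
    rw [hw]
    simp only [add_mul, mul_assoc, hxdy, mul_zero, add_zero]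
  have hwx : w * x = x * xd + y * w := by
    nth_rewrite 1 [hw]
    rw [add_mul, mul_assoc, mul_assoc, hwxdx, hx.commute.eq]
  obtain ⟨k, hk⟩ := hx.exists_pow_succ_mul_inv
  have hyi : ∀ i, p + 1 ≤ i → y ^ i = 0 := fun i hi => pow_eq_zero_of_le hi hy
  have hterm : ∀ i, y ^ i * x ^ (p + k + 1 - i) * w = y ^ i * x ^ (p + k - i) := by
    intro i
    rcases le_or_gt i p with hi | hi
    · rw [Nat.sub_add_comm (by omega), mul_assoc, pow_succ, mul_assoc, hxw,
        ← mul_assoc (x ^ _) x xd, ← pow_succ, hk _ (by omega)]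
    · rw [hyi i hi, zero_mul, zero_mul, zero_mul]
  refine ⟨?_, ?_, p + k, ?_⟩
  · rw [add_mul, mul_add, hxw, hwy, add_zero, hwx]
  · rw [mul_add, hwy, add_zero, mul_assoc, hxw, hx.commute.eq, hwxdx]
  · rw [add_pow_eq_sum_of_mul_eq_zero hxy, sum_mul, sum_congr rfl fun i _ => hterm i,
      sum_range_succ, hyi _ (by omega), zero_mul, add_zero, add_pow_eq_sum_of_mul_eq_zero hxy]

theorem add_of_mul_eq_zero_of_pow_eq_zero' (hx : IsDrazinInv x xd) (hyx : y * x = 0)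
    (hy : y ^ (p + 1) = 0) :
    IsDrazinInv (x + y) (∑ j ∈ range (p + 1), xd ^ (j + 1) * y ^ j) := by
  refine of_op ?_
  simpa [MulOpposite.op_pow] using
    hx.op.add_of_mul_eq_zero_of_pow_eq_zero (y := MulOpposite.op y)
      (by rw [← MulOpposite.op_mul, hyx, MulOpposite.op_zero])
      (by rw [← MulOpposite.op_pow, hy, MulOpposite.op_zero])

end IsDrazinInv

section MatrixProducts
variable {R ι κ : Type*} [Ring R] [Fintype ι] [DecidableEq ι] [Fintype κ] [DecidableEq κ]

theorem Matrix.mul_pow_succ_eq_mul_pow_mul (r : Matrix κ ι R) (t : Matrix ι κ R) (j : ℕ) :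
    (r * t) ^ (j + 1) = r * (t * r) ^ j * t := by
  induction j with
  | zero => simp
  | succ j ih =>
    rw [pow_succ, ih, pow_succ]
    simp only [Matrix.mul_assoc]

theorem IsDrazinInv.cline {t : Matrix ι κ R} {r : Matrix κ ι R} {w : Matrix ι ι R}
    (h : IsDrazinInv (t * r) w) : IsDrazinInv (r * t) (r * w ^ 2 * t) := by
  have hw₁ : (t * r) * w ^ 2 = w := by rw [sq, ← mul_assoc, h.mul_inv_inv]
  have hw₂ : w ^ 2 * (t * r) = w := by rw [sq, h.inv_inv_mul]
  obtain ⟨k, hk⟩ := h.2.2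
  refine ⟨?_, ?_, k + 1, ?_⟩
  · calc r * t * (r * w ^ 2 * t) = r * ((t * r) * w ^ 2) * t := by
          simp only [Matrix.mul_assoc]
      _ = r * (w ^ 2 * (t * r)) * t := by rw [hw₁, hw₂]
      _ = r * w ^ 2 * t * (r * t) := by simp only [Matrix.mul_assoc]
  · calc r * w ^ 2 * t * (r * t) * (r * w ^ 2 * t) =
          r * (w ^ 2 * (t * r) * (t * r * w ^ 2)) * t := by
          simp only [Matrix.mul_assoc]
      _ = r * w ^ 2 * t := by rw [hw₁, hw₂, ← sq]
  · calc (r * t) ^ (k + 1 + 1) * (r * w ^ 2 * t) =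
          r * ((t * r) ^ (k + 1) * (t * r * w ^ 2)) * t := by
          rw [Matrix.mul_pow_succ_eq_mul_pow_mul]; simp only [Matrix.mul_assoc]
      _ = (r * t) ^ (k + 1) := by rw [hw₁, hk, Matrix.mul_pow_succ_eq_mul_pow_mul]

theorem Matrix.fromBlocks_zero₂₁_zero₂₂_pow_succ (X : Matrix ι ι R) (Y : Matrix ι κ R)
    (i : ℕ) :
    fromBlocks X Y 0 (0 : Matrix κ κ R) ^ (i + 1) =
      fromBlocks (X ^ (i + 1)) (X ^ i * Y) 0 0 := by
  induction i with
  | zero => simp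
  | succ i ih => simp [pow_succ _ (i + 1), ih, fromBlocks_multiply, pow_succ, Matrix.mul_assoc]

theorem Matrix.fromBlocks_zero₁₂_zero₂₁_pow (X : Matrix ι ι R) (Y : Matrix κ κ R)
    (i : ℕ) :
    fromBlocks X 0 0 Y ^ i = fromBlocks (X ^ i) 0 0 (Y ^ i) := by
  induction i with
  | zero => simp [fromBlocks_one]
  | succ i ih => simp [pow_succ, ih, fromBlocks_multiply]

theorem IsDrazinInv.fromBlocks_zero₁₂_zero₂₁ {A Ad : Matrix ι ι R} {D Dd : Matrix κ κ R}
    (hA : IsDrazinInv A Ad) (hD : IsDrazinInv D Dd) :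
    IsDrazinInv (fromBlocks A 0 0 D) (fromBlocks Ad 0 0 Dd) := by
  obtain ⟨k, hk⟩ := hA.exists_pow_succ_mul_inv
  obtain ⟨l, hl⟩ := hD.exists_pow_succ_mul_inv
  refine ⟨?_, ?_, k + l, ?_⟩
  · simp [fromBlocks_multiply, hA.commute.eq, hD.commute.eq]
  · simp [fromBlocks_multiply, hA.inv_mul_inv, hD.inv_mul_inv]
  · simp [Matrix.fromBlocks_zero₁₂_zero₂₁_pow, fromBlocks_multiply,
      hk _ (Nat.le_add_right k l), hl _ (Nat.le_add_left l k)]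

end MatrixProducts

section BlockMatrix
variable {R ι κ : Type*} [Ring R] [Fintype ι] [DecidableEq ι]
  {A Ad : Matrix ι ι R} {B : Matrix ι κ R} {C : Matrix κ ι R}

theorem fromBlocks_eq_core_add (hA : IsDrazinInv A Ad) :
    fromBlocks A B C (C * Ad * B) =
      fromBlocks (A ^ 2 * Ad) (A * Ad * B) (C * A * Ad) (C * Ad * B) +
        fromBlocks 0 0 (C * (1 - A * Ad)) 0 +
        fromBlocks ((1 - A * Ad) * A) ((1 - A * Ad) * B) 0 0 := by
  rw [fromBlocks_add, fromBlocks_add, fromBlocks_inj]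
  refine ⟨?_, ?_, ?_, by simp⟩
  · rw [sub_mul, one_mul, hA.sq_mul_inv]; abel
  · rw [Matrix.sub_mul, Matrix.one_mul]; abel
  · rw [Matrix.mul_sub, Matrix.mul_one, ← Matrix.mul_assoc]; abel

variable [Fintype κ]

theorem fromBlocks_mul_core_eq_zero (hCAA : C * (1 - A * Ad) * A = 0) :
    fromBlocks 0 0 (C * (1 - A * Ad)) 0 *
      fromBlocks (A ^ 2 * Ad) (A * Ad * B) (C * A * Ad) (C * Ad * B) = 0 := by
  simp [fromBlocks_multiply, sq, ← Matrix.mul_assoc, hCAA]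

theorem core_add_mul_fromBlocks_eq_zero (hA : IsDrazinInv A Ad)
    (hCAA : C * (1 - A * Ad) * A = 0) (hCAB : C * (1 - A * Ad) * B = 0) :
    (fromBlocks (A ^ 2 * Ad) (A * Ad * B) (C * A * Ad) (C * Ad * B) +
        fromBlocks 0 0 (C * (1 - A * Ad)) 0) *
      fromBlocks ((1 - A * Ad) * A) ((1 - A * Ad) * B) 0 0 = 0 := by
  have hC : C * A * Ad + C * (1 - A * Ad) = C := by
    rw [Matrix.mul_sub, Matrix.mul_one, ← Matrix.mul_assoc]; abel
  have hP : A ^ 2 * Ad * (1 - A * Ad) = 0 := by rw [mul_assoc, hA.inv_mul_one_sub, mul_zero]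
  simp [fromBlocks_add, hC, fromBlocks_multiply, ← Matrix.mul_assoc, hP, hCAA, hCAB]

theorem fromBlocks_mul_drazin_core_eq_zero {Wd : Matrix ι ι R} (hA : IsDrazinInv A Ad)
    (hW : IsDrazinInv (A * (A * Ad + Ad * B * C * Ad)) Wd) (X : Matrix ι ι R)
    (Y : Matrix κ ι R) :
    fromBlocks (X * (1 - A * Ad)) 0 (Y * (1 - A * Ad)) 0 *
      (fromRows (1 : Matrix ι ι R) (C * Ad) * (Wd ^ 2 * A) *
        fromCols (1 : Matrix ι ι R) (Ad * B)) = 0 := by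
  have hW_eq : A * (A * Ad + Ad * B * C * Ad) = A * Ad * (A + B * C * Ad) := by
    rw [mul_add, mul_add, ← mul_assoc A A Ad, ← sq, hA.sq_mul_inv]
    simp only [Matrix.mul_assoc]
  have hπWd : (1 - A * Ad) * Wd = 0 := hW.mul_inv_eq_zero (by
    rw [hW_eq, ← mul_assoc, hA.one_sub_mul_mul_inv, zero_mul])
  rw [← Matrix.mul_assoc, ← Matrix.mul_assoc, fromBlocks_mul_fromRows]
  simp [sq, ← Matrix.mul_assoc, Matrix.mul_assoc X, Matrix.mul_assoc Y, hπWd]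

variable [DecidableEq κ]

theorem isDrazinInv_fromBlocks_core {Wd : Matrix ι ι R} (hA : IsDrazinInv A Ad)
    (hW : IsDrazinInv (A * (A * Ad + Ad * B * C * Ad)) Wd) :
    IsDrazinInv (fromBlocks (A ^ 2 * Ad) (A * Ad * B) (C * A * Ad) (C * Ad * B))
      (fromRows (1 : Matrix ι ι R) (C * Ad) * (Wd ^ 2 * A) *
        fromCols (1 : Matrix ι ι R) (Ad * B)) := by
  have hPAd : A ^ 2 * Ad * Ad = A * Ad := by
    rw [sq, mul_assoc A A Ad, mul_assoc A (A * Ad) Ad, hA.mul_inv_inv]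
  have hAdP : Ad * (A ^ 2 * Ad) = A * Ad := by
    rw [hA.sq_mul_inv, ← mul_assoc, ← mul_assoc, hA.inv_mul_inv, ← hA.commute.eq]
  have hQ : fromBlocks (A ^ 2 * Ad) (A * Ad * B) (C * A * Ad) (C * Ad * B) =
      fromRows (1 : Matrix ι ι R) (C * Ad) *
        (A ^ 2 * Ad * fromCols (1 : Matrix ι ι R) (Ad * B)) := by
    rw [mul_fromCols, fromRows_mul_fromCols, fromBlocks_inj]
    refine ⟨by simp, ?_, ?_, ?_⟩
    · rw [Matrix.one_mul, ← Matrix.mul_assoc, hPAd]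
    · rw [Matrix.mul_one, Matrix.mul_assoc C Ad, hAdP, Matrix.mul_assoc]
    · simp only [← Matrix.mul_assoc, hPAd]
      rw [Matrix.mul_assoc C Ad A, Matrix.mul_assoc C (Ad * A) Ad, hA.inv_mul_inv]
  have hTR : A ^ 2 * Ad * fromCols (1 : Matrix ι ι R) (Ad * B) *
      fromRows (1 : Matrix ι ι R) (C * Ad) =
      A * (A * Ad + Ad * B * C * Ad) := by
    rw [Matrix.mul_assoc, fromCols_mul_fromRows, Matrix.mul_one, mul_add, mul_add, Matrix.mul_one]
    simp only [← Matrix.mul_assoc, hPAd]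
    rw [sq]
  have hWd : Wd * (A * Ad) = Wd := hW.inv_mul_eq_inv (by
    rw [mul_assoc, add_mul, hA.isIdempotentElem_mul_inv.eq, mul_assoc (Ad * B * C) Ad,
      ← mul_assoc Ad A Ad, hA.inv_mul_inv])
  have hWdP : Wd ^ 2 * (A ^ 2 * Ad) = Wd ^ 2 * A := by
    rw [hA.sq_mul_inv, sq, ← mul_assoc, mul_assoc Wd Wd, hWd]
  rw [hQ]
  convert (hTR ▸ hW).cline using 1
  rw [← hWdP]
  simp only [Matrix.mul_assoc]

theorem fromBlocks_one_sub_pow_succ (hA : IsDrazinInv A Ad) (i : ℕ) :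
    fromBlocks ((1 - A * Ad) * A) ((1 - A * Ad) * B) 0 (0 : Matrix κ κ R) ^ (i + 1) =
      fromBlocks (A ^ (i + 1) * (1 - A * Ad)) (A ^ i * (1 - A * Ad) * B) 0 0 := by
  have hc := hA.commute_one_sub.symm
  have he := hA.isIdempotentElem_one_sub
  rw [Matrix.fromBlocks_zero₂₁_zero₂₂_pow_succ, fromBlocks_inj]
  refine ⟨?_, ?_, rfl, rfl⟩
  · rw [hc.mul_pow, he.pow_succ_eq, (hc.pow_right (i + 1)).eq]
  · rw [hc.mul_pow, ← Matrix.mul_assoc, mul_assoc, ← (hc.pow_right i).eq, ← mul_assoc,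
      ← pow_succ, he.pow_succ_eq, (hc.pow_right i).eq]

theorem fromBlocks_one_sub_pow_eq_zero (hA : IsDrazinInv A Ad) {ν : ℕ}
    (hind : (1 - A * Ad) * A ^ ν = 0) :
    fromBlocks ((1 - A * Ad) * A) ((1 - A * Ad) * B) 0 (0 : Matrix κ κ R) ^ (ν + 1) = 0 := by
  have hind' : A ^ ν * (1 - A * Ad) = 0 := by rw [(hA.commute_one_sub.pow_left ν).eq, hind]
  simp [fromBlocks_one_sub_pow_succ hA, pow_succ', mul_assoc, hind']

theorem isDrazinInv_fromBlocks_of_schur_eq_zero {Qd : Matrix (ι ⊕ κ) (ι ⊕ κ) R}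
    (hA : IsDrazinInv A Ad) (hCAA : C * (1 - A * Ad) * A = 0) (hCAB : C * (1 - A * Ad) * B = 0)
    {ν : ℕ} (hind : (1 - A * Ad) * A ^ ν = 0)
    (hQd : IsDrazinInv (fromBlocks (A ^ 2 * Ad) (A * Ad * B) (C * A * Ad) (C * Ad * B)) Qd) :
    IsDrazinInv (fromBlocks A B C (C * Ad * B))
      (∑ j ∈ range (ν + 1), fromBlocks ((1 - A * Ad) * A) ((1 - A * Ad) * B) 0 0 ^ j *
        (Qd + Qd ^ 2 * fromBlocks 0 0 (C * (1 - A * Ad)) 0) ^ (j + 1)) := by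
  have hS := hQd.add_of_mul_eq_zero_of_pow_eq_zero' (fromBlocks_mul_core_eq_zero hCAA) (p := 1)
    (by simp [sq, fromBlocks_multiply])
  simp only [sum_range_succ, sum_range_zero, zero_add, pow_zero, mul_one, pow_one] at hS
  rw [fromBlocks_eq_core_add hA]
  exact hS.add_of_mul_eq_zero_of_pow_eq_zero (core_add_mul_fromBlocks_eq_zero hA hCAA hCAB)
    (fromBlocks_one_sub_pow_eq_zero hA hind)

theorem sum_fromBlocks_one_sub_pow_mul_eq {Wd : Matrix ι ι R}
    {Qd : Matrix (ι ⊕ κ) (ι ⊕ κ) R}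
    (hA : IsDrazinInv A Ad) (hW : IsDrazinInv (A * (A * Ad + Ad * B * C * Ad)) Wd)
    (hQd : Qd = fromRows (1 : Matrix ι ι R) (C * Ad) * (Wd ^ 2 * A) *
      fromCols (1 : Matrix ι ι R) (Ad * B)) (ν : ℕ) :
    ∑ j ∈ range (ν + 1), fromBlocks ((1 - A * Ad) * A) ((1 - A * Ad) * B) 0 0 ^ j *
        (Qd + Qd ^ 2 * fromBlocks 0 0 (C * (1 - A * Ad)) 0) ^ (j + 1) =
      Qd + Qd ^ 2 * fromBlocks 0 0 (C * (1 - A * Ad)) 0 +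
        ∑ j ∈ Icc 1 ν, fromBlocks 0 (A ^ (j - 1) * (1 - A * Ad) * B) 0 0 *
          (Qd ^ (j + 1) + Qd ^ (j + 2) * fromBlocks 0 0 (C * (1 - A * Ad)) 0) := by
  set K : Matrix (ι ⊕ κ) (ι ⊕ κ) R := fromBlocks 0 0 (C * (1 - A * Ad)) 0
  have hKQd : K * Qd = 0 := by simpa [hQd] using fromBlocks_mul_drazin_core_eq_zero hA hW 0 C
  have hLQd : ∀ i, fromBlocks ((1 - A * Ad) * A) ((1 - A * Ad) * B) 0 0 ^ (i + 1) * Qd =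
      fromBlocks 0 (A ^ i * (1 - A * Ad) * B) 0 0 * Qd := fun i => by
    have hP := fromBlocks_mul_drazin_core_eq_zero hA hW (A ^ (i + 1)) 0
    rw [← hQd, Matrix.zero_mul] at hP
    have hsplit : fromBlocks (A ^ (i + 1) * (1 - A * Ad)) (A ^ i * (1 - A * Ad) * B) 0
        (0 : Matrix κ κ R) = fromBlocks 0 (A ^ i * (1 - A * Ad) * B) 0 0 +
          fromBlocks (A ^ (i + 1) * (1 - A * Ad)) 0 0 0 := by
      simp [fromBlocks_add]
    rw [fromBlocks_one_sub_pow_succ hA, hsplit, add_mul, hP, add_zero]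
  have hterm : ∀ i, fromBlocks ((1 - A * Ad) * A) ((1 - A * Ad) * B) 0 0 ^ (i + 1) *
      (Qd + Qd ^ 2 * K) ^ (i + 2) =
      fromBlocks 0 (A ^ i * (1 - A * Ad) * B) 0 0 * (Qd ^ (i + 2) + Qd ^ (i + 3) * K) := fun i => by
    have hfac : Qd ^ (i + 2) + Qd ^ (i + 3) * K = Qd * (Qd ^ (i + 1) + Qd ^ (i + 2) * K) := by
      rw [mul_add, ← pow_succ', ← mul_assoc, ← pow_succ']
    rw [add_sq_mul_pow_succ hKQd (i + 1), hfac, ← mul_assoc, hLQd, mul_assoc]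
  rw [sum_range_succ', sum_congr rfl fun i _ => hterm i, pow_zero, one_mul, zero_add, pow_one,
    add_comm, ← Ico_add_one_right_eq_Icc, sum_Ico_eq_sum_range, Nat.add_sub_cancel]
  refine congrArg _ (sum_congr rfl fun i _ => ?_)
  rw [add_comm 1 i, Nat.add_sub_cancel]

end BlockMatrix

theorem stmt_13_general {m n : ℕ}
    (A Ad : Matrix (Fin m) (Fin m) ℂ) (B : Matrix (Fin m) (Fin n) ℂ)
    (C : Matrix (Fin n) (Fin m) ℂ) (D : Matrix (Fin n) (Fin n) ℂ)
    (hAd : IsDrazinInverse A Ad)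
    (Z : Matrix (Fin n) (Fin n) ℂ) (hZ : Z = D - C * Ad * B)
    (Zd : Matrix (Fin n) (Fin n) ℂ) (hZd : IsDrazinInverse Z Zd)
    (hBZ : B * Z = 0) (hZC : Z * C = 0)
    (hCAA : C * (1 - A * Ad) * A = 0) (hCAB : C * (1 - A * Ad) * B = 0)
    (AWd : Matrix (Fin m) (Fin m) ℂ)
    (hAWd : IsDrazinInverse (A * (A * Ad + Ad * B * C * Ad)) AWd)
    (Q Qd : Matrix (Fin m ⊕ Fin n) (Fin m ⊕ Fin n) ℂ)
    (hQ : Q = Matrix.fromBlocks (A ^ 2 * Ad) (A * Ad * B) (C * A * Ad) (C * Ad * B))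
    (hQd : IsDrazinInverse Q Qd)
    (n' : ℕ)
    -- `ind A = n' - 1`: `Aπ * A ^ (n'-1) = 0` and `n' - 1` is minimal with this property
    (hindA : (1 - A * Ad) * A ^ (n' - 1) = 0) :
    Qd = Matrix.fromRows (1 : Matrix (Fin m) (Fin m) ℂ) (C * Ad) *
        (AWd ^ 2 * A) * Matrix.fromCols (1 : Matrix (Fin m) (Fin m) ℂ) (Ad * B) ∧
    IsDrazinInverse (Matrix.fromBlocks A B C D)
      (Matrix.fromBlocks 0 0 0 Zd + Qd +
        Qd ^ 2 * Matrix.fromBlocks 0 0 (C * (1 - A * Ad)) 0 +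
        ∑ j ∈ Finset.Icc 1 (n' - 1),
          Matrix.fromBlocks 0 (A ^ (j - 1) * (1 - A * Ad) * B) 0 0 *
            (Qd ^ (j + 1) +
              Qd ^ (j + 2) * Matrix.fromBlocks 0 0 (C * (1 - A * Ad)) 0)) := by
  rw [isDrazinInverse_iff_isDrazinInv] at *
  subst hQ
  have hQd_eq := hQd.unique (isDrazinInv_fromBlocks_core hAd hAWd)
  refine ⟨hQd_eq, ?_⟩
  have hM := (isDrazinInv_fromBlocks_of_schur_eq_zero hAd hCAA hCAB hindA hQd).add_of_mul_eq_zero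
    (IsDrazinInv.zero.fromBlocks_zero₁₂_zero₂₁ hZd)
    (by simp [fromBlocks_multiply, Matrix.mul_assoc, hBZ])
    (by simp [fromBlocks_multiply, ← Matrix.mul_assoc, hZC])
  rw [sum_fromBlocks_one_sub_pow_mul_eq hAd hAWd hQd_eq] at hM
  convert hM using 1
  · simp [fromBlocks_add, hZ]
  · abel

theorem stmt_13 {m n : ℕ}
    (A Ad : Matrix (Fin m) (Fin m) ℂ) (B : Matrix (Fin m) (Fin n) ℂ)
    (C : Matrix (Fin n) (Fin m) ℂ) (D : Matrix (Fin n) (Fin n) ℂ)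
    (hAd : IsDrazinInverse A Ad)
    (Z : Matrix (Fin n) (Fin n) ℂ) (hZ : Z = D - C * Ad * B)
    (Zd : Matrix (Fin n) (Fin n) ℂ) (hZd : IsDrazinInverse Z Zd)
    (hBZ : B * Z = 0) (hZC : Z * C = 0)
    (hCAA : C * (1 - A * Ad) * A = 0) (hCAB : C * (1 - A * Ad) * B = 0)
    (AWd : Matrix (Fin m) (Fin m) ℂ)
    (hAWd : IsDrazinInverse (A * (A * Ad + Ad * B * C * Ad)) AWd)
    (Q Qd : Matrix (Fin m ⊕ Fin n) (Fin m ⊕ Fin n) ℂ)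
    (hQ : Q = Matrix.fromBlocks (A ^ 2 * Ad) (A * Ad * B) (C * A * Ad) (C * Ad * B))
    (hQd : IsDrazinInverse Q Qd)
    (n' : ℕ) (hn' : 1 ≤ n')
    -- `ind A = n' - 1`: `Aπ * A ^ (n'-1) = 0` and `n' - 1` is minimal with this property
    (hindA : (1 - A * Ad) * A ^ (n' - 1) = 0)
    (hindA' : ∀ j < n' - 1, (1 - A * Ad) * A ^ j ≠ 0) :
    Qd = Matrix.fromRows (1 : Matrix (Fin m) (Fin m) ℂ) (C * Ad) *
        (AWd ^ 2 * A) * Matrix.fromCols (1 : Matrix (Fin m) (Fin m) ℂ) (Ad * B) ∧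
    IsDrazinInverse (Matrix.fromBlocks A B C D)
      (Matrix.fromBlocks 0 0 0 Zd + Qd +
        Qd ^ 2 * Matrix.fromBlocks 0 0 (C * (1 - A * Ad)) 0 +
        ∑ j ∈ Finset.Icc 1 (n' - 1),
          Matrix.fromBlocks 0 (A ^ (j - 1) * (1 - A * Ad) * B) 0 0 *
            (Qd ^ (j + 1) +
              Qd ^ (j + 2) * Matrix.fromBlocks 0 0 (C * (1 - A * Ad)) 0)) :=
  stmt_13_general A Ad B C D hAd Z hZ Zd hZd hBZ hZC hCAA hCAB AWd hAWd Q Qd hQ hQd n' hindA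
end
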